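/- arXiv:1406.0390 — 9 statements merged into one kernel-verified Lean document; each statement's English description precedes it below -/
import Mathlib

section
/- Let X and Y be real Hilbert spaces, let a and b be continuous bilinear forms on X × Y, and let A and B be continuous linear operators from X to Y. Suppose there are constants C₁, C₂ > 0 such that for all u ∈ X: (i) b(u, B u) + a(u, A u) ≥ (1/C₁) ‖u‖²; (ii) b(u, A u) ≥ 0; (iii) |a(u, B u)| ≤ C₂ a(u, A u). Then the bilinear form b + a satisfies an inf-sup condition on X × Y: there is a constant c > 0, depending only on C₁, C₂ and the operator norms of A and B, such that for every nonzero u ∈ X, sup over nonzero v ∈ Y of |(b+a)(u,v)|/(‖u‖ ‖v‖) ≥ c. In fact, for λ = C₂ + 1 the test function v = B u + λ A u satisfies (b+a)(u, B u + λ A u) ≥ (1/C₁) ‖u‖². -/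
/-!
Pair `u` with `v = B u + (C₂ + 1) A u`. Expanding,
`(b + a)(u, v) = [b(u,Bu) + a(u,Au)] + (C₂ + 1) b(u,Au) + [a(u,Bu) + C₂ a(u,Au)]`;
the first bracket is at least `‖u‖²/C₁`, the middle term is nonnegative, and the last bracket
is nonnegative by `|a(u,Bu)| ≤ C₂ a(u,Au)`. Since `‖v‖ ≤ (‖B‖ + (C₂ + 1)‖A‖)‖u‖`, a lower bound
`α‖u‖² ≤ L(u, T u)` by a bounded operator `T` is already an inf-sup condition.
-/

section

variable {X Y : Type*} [NormedAddCommGroup X] [NormedSpace ℝ X]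
  [NormedAddCommGroup Y] [NormedSpace ℝ Y]

theorem le_apply_add_smul_add_apply_add_smul (a b : X →L[ℝ] Y →L[ℝ] ℝ) (u : X) (w z : Y)
    {C : ℝ} (hC : 0 ≤ C + 1) (hbz : 0 ≤ b u z) (haw : |a u w| ≤ C * a u z) :
    b u w + a u z ≤ b u (w + (C + 1) • z) + a u (w + (C + 1) • z) := by
  have expand : b u (w + (C + 1) • z) + a u (w + (C + 1) • z)
      = (b u w + a u z) + (C + 1) * b u z + (a u w + C * a u z) := by
    simp only [map_add, map_smul, smul_eq_mul]
    ring
  have hcross : 0 ≤ a u w + C * a u z := by linarith [neg_abs_le (a u w)]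
  rw [expand]
  linarith [mul_nonneg hC hbz]

theorem exists_infSup_of_le_apply (L : X →L[ℝ] Y →L[ℝ] ℝ) (T : X →L[ℝ] Y) {α : ℝ}
    (hα : 0 < α) (hT : ∀ u, α * ‖u‖ ^ 2 ≤ L u (T u)) :
    ∃ c > (0 : ℝ), ∀ u : X, u ≠ 0 → ∃ v : Y, v ≠ 0 ∧ c ≤ |L u v| / (‖u‖ * ‖v‖) := by
  refine ⟨α / (‖T‖ + 1), by positivity, fun u hu => ?_⟩
  have hLpos : 0 < L u (T u) := (hT u).trans_lt' (by positivity)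
  have hTu_ne : T u ≠ 0 := fun hTu => by simp [hTu] at hLpos
  have hTu : ‖T u‖ ≤ (‖T‖ + 1) * ‖u‖ := by nlinarith [T.le_opNorm u, norm_nonneg u]
  refine ⟨T u, hTu_ne, ?_⟩
  rw [abs_of_pos hLpos, le_div_iff₀ (by positivity)]
  calc α / (‖T‖ + 1) * (‖u‖ * ‖T u‖)
      ≤ α / (‖T‖ + 1) * (‖u‖ * ((‖T‖ + 1) * ‖u‖)) := by gcongr
    _ = α * ‖u‖ ^ 2 := by field_simp
    _ ≤ L u (T u) := hT u

end

theorem infSup_of_combination_general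
    {X Y : Type*} [NormedAddCommGroup X] [InnerProductSpace ℝ X]
    [NormedAddCommGroup Y] [InnerProductSpace ℝ Y]
    (a b : X →L[ℝ] Y →L[ℝ] ℝ) (A B : X →L[ℝ] Y) (C₁ C₂ : ℝ)
    (hC₁ : 0 < C₁) (hC₂ : 0 < C₂)
    (h1 : ∀ u : X, (1 / C₁) * ‖u‖ ^ 2 ≤ b u (B u) + a u (A u))
    (h2 : ∀ u : X, 0 ≤ b u (A u))
    (h3 : ∀ u : X, |a u (B u)| ≤ C₂ * a u (A u)) :
    (∀ u : X, (1 / C₁) * ‖u‖ ^ 2 ≤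
        b u (B u + (C₂ + 1) • A u) + a u (B u + (C₂ + 1) • A u)) ∧
    ∃ c > (0 : ℝ), ∀ u : X, u ≠ 0 → ∃ v : Y, v ≠ 0 ∧
      c ≤ |b u v + a u v| / (‖u‖ * ‖v‖) := by
  have key : ∀ u : X, (1 / C₁) * ‖u‖ ^ 2 ≤
      b u (B u + (C₂ + 1) • A u) + a u (B u + (C₂ + 1) • A u) := fun u =>
    (h1 u).trans
      (le_apply_add_smul_add_apply_add_smul a b u _ _ (by linarith) (h2 u) (h3 u))
  exact ⟨key, exists_infSup_of_le_apply (b + a) (B + (C₂ + 1) • A) (by positivity) key⟩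

/-- **Combining two bilinear forms into an inf-sup condition.**
Let `a`, `b` be continuous bilinear forms on `X × Y` (real Hilbert spaces) and
`A`, `B` continuous linear operators from `X` to `Y` with
`b(u,Bu) + a(u,Au) ≥ (1/C₁)‖u‖²`, `b(u,Au) ≥ 0` and `|a(u,Bu)| ≤ C₂ a(u,Au)`.
Then `b + a` satisfies an inf-sup condition on `X × Y`; in fact, for `λ = C₂ + 1`
the test function `v = B u + λ A u` satisfies `(b+a)(u, v) ≥ (1/C₁)‖u‖²`. -/
theorem infSup_of_combination
    {X Y : Type*} [NormedAddCommGroup X] [InnerProductSpace ℝ X] [CompleteSpace X]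
    [NormedAddCommGroup Y] [InnerProductSpace ℝ Y] [CompleteSpace Y]
    (a b : X →L[ℝ] Y →L[ℝ] ℝ) (A B : X →L[ℝ] Y) (C₁ C₂ : ℝ)
    (hC₁ : 0 < C₁) (hC₂ : 0 < C₂)
    (h1 : ∀ u : X, (1 / C₁) * ‖u‖ ^ 2 ≤ b u (B u) + a u (A u))
    (h2 : ∀ u : X, 0 ≤ b u (A u))
    (h3 : ∀ u : X, |a u (B u)| ≤ C₂ * a u (A u)) :
    (∀ u : X, (1 / C₁) * ‖u‖ ^ 2 ≤
        b u (B u + (C₂ + 1) • A u) + a u (B u + (C₂ + 1) • A u)) ∧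
    ∃ c > (0 : ℝ), ∀ u : X, u ≠ 0 → ∃ v : Y, v ≠ 0 ∧
      c ≤ |b u v + a u v| / (‖u‖ * ‖v‖) :=
  infSup_of_combination_general a b A B C₁ C₂ hC₁ hC₂ h1 h2 h3
end

section
/- There exists a constant C > 0 such that for every τ > 0 and every u ∈ L²(ℝ) with finite Slobodetski H^{1/2} seminorm, the L² projection P_τ u of u onto the τ-piecewise constant functions satisfies |P_τ u|_{H^{1/2}_w} ≤ C |u|_{H^{1/2}}; that is, ‖P_τ u − (P_τ u)(· − y)‖_{L²(ℝ)} ≤ C |y|^{1/2} |u|_{H^{1/2}} for all y ∈ ℝ, with C independent of τ and u. -/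
open MeasureTheory

/-- Squared Slobodetski `H^{1/2}` seminorm on `ℝ`. -/
noncomputable def slobHalfSq (u : ℝ → ℝ) : ENNReal :=
  ∫⁻ x : ℝ, ∫⁻ y : ℝ, ENNReal.ofReal ((u x - u y) ^ 2 / |x - y| ^ 2)

/-- `L²` orthogonal projection onto `τ`-piecewise constant functions: on each interval
`(kτ, (k+1)τ)` the value is the average of `u` over that interval. -/
noncomputable def projPC (τ : ℝ) (u : ℝ → ℝ) (x : ℝ) : ℝ :=
  (1 / τ) * ∫ t in Set.Ioc ((⌊x / τ⌋ : ℝ) * τ) ((⌊x / τ⌋ + 1 : ℝ) * τ), u t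

/-!
Write `ω(y) = ‖u - u(· - y)‖²`. Averaging the quasi-triangle inequality
`ω(y) ≤ 2 ω(s) + 2 ω(y - s)` over `s ∈ (0, y]` and comparing with
`|u|²_{H^{1/2}} = ∫ ω(s) / s² ds` gives `ω(y) ≤ 4 |y| |u|²_{H^{1/2}}`. Jensen's inequality on each
cell gives `‖u - P_τ u‖² ≤ τ |u|²_{H^{1/2}}`, which settles `|y| ≥ τ` by the triangle inequality.
For `|y| ≤ τ`, the difference `P_τ u - (P_τ u)(· - y)` lives on a set of measure `|y|` in each
cell, where it is the jump between two adjacent averages, and Jensen's inequality bounds the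
squared jump by `4` times the `H^{1/2}` interaction energy of the two cells.
-/

open Set ENNReal Function

section Averages

variable {α : Type*} [MeasurableSpace α] {μ : Measure α}

theorem lintegral_ofReal_sq_add_le {f g : α → ℝ} (hf : AEMeasurable f μ) :
    ∫⁻ x, ENNReal.ofReal ((f x + g x) ^ 2) ∂μ ≤
      2 * ∫⁻ x, ENNReal.ofReal (f x ^ 2) ∂μ + 2 * ∫⁻ x, ENNReal.ofReal (g x ^ 2) ∂μ := by
  have hpt : ∀ x, ENNReal.ofReal ((f x + g x) ^ 2) ≤
      2 * ENNReal.ofReal (f x ^ 2) + 2 * ENNReal.ofReal (g x ^ 2) := fun x => by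
    rw [← ENNReal.ofReal_ofNat 2, ← ENNReal.ofReal_mul zero_le_two,
      ← ENNReal.ofReal_mul zero_le_two, ← ENNReal.ofReal_add (by positivity) (by positivity),
      ← mul_add]
    exact ENNReal.ofReal_le_ofReal add_sq_le
  calc ∫⁻ x, ENNReal.ofReal ((f x + g x) ^ 2) ∂μ
      ≤ ∫⁻ x, (2 * ENNReal.ofReal (f x ^ 2) + 2 * ENNReal.ofReal (g x ^ 2)) ∂μ := lintegral_mono hpt
    _ = _ := by
      rw [lintegral_add_left' ((hf.pow_const 2).ennreal_ofReal.const_mul 2),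
        lintegral_const_mul' _ _ ofNat_ne_top, lintegral_const_mul' _ _ ofNat_ne_top]

theorem ofReal_sq_sub_setAverage_le {s : Set α} (hs₀ : μ s ≠ 0) (hs : μ s ≠ ∞) {f : α → ℝ}
    (hf : MemLp f 2 (μ.restrict s)) (c : ℝ) :
    ENNReal.ofReal ((c - ⨍ x in s, f x ∂μ) ^ 2) ≤ ⨍⁻ x in s, ENNReal.ofReal ((c - f x) ^ 2) ∂μ := by
  have : IsFiniteMeasure (μ.restrict s) := isFiniteMeasure_restrict.2 hs
  have hg : MemLp (fun x => c - f x) 2 (μ.restrict s) := (memLp_const c).sub hf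
  have hmean : ⨍ x in s, (c - f x) ∂μ = c - ⨍ x in s, f x ∂μ := by
    have hreal : μ.real s ≠ 0 := ENNReal.toReal_ne_zero.2 ⟨hs₀, hs⟩
    simp only [setAverage_eq, integral_sub (integrable_const c) (hf.integrable one_le_two),
      setIntegral_const, smul_sub, smul_smul, inv_mul_cancel₀ hreal, one_smul]
  have jensen := (even_two.convexOn_pow (𝕜 := ℝ)).map_set_average_le
    (continuous_pow 2).continuousOn isClosed_univ hs₀ hs (ae_of_all _ fun _ => mem_univ _)
    (hg.integrable one_le_two) hg.integrable_sq
  rw [← hmean, setLAverage_eq,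
    ← ofReal_setAverage hg.integrable_sq (ae_of_all _ fun _ => sq_nonneg _)]
  exact ENNReal.ofReal_le_ofReal jensen

end Averages

section Cells

variable {τ : ℝ}

/-- Half-open on the right, unlike the `Ioc` that `projPC` integrates over: the cells have to be
the level sets of `⌊x / τ⌋`, and the two intervals differ by a null set. -/
def cell (τ : ℝ) (k : ℤ) : Set ℝ := Ico (k * τ) ((k + 1) * τ)

theorem mem_cell_iff (hτ : 0 < τ) {x : ℝ} {k : ℤ} : x ∈ cell τ k ↔ ⌊x / τ⌋ = k := by
  rw [cell, mem_Ico, Int.floor_eq_iff, le_div_iff₀ hτ, div_lt_iff₀ hτ]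

theorem volume_cell (τ : ℝ) (k : ℤ) : volume (cell τ k) = ENNReal.ofReal τ := by
  rw [cell, Real.volume_Ico]
  ring_nf

theorem measurableSet_cell (τ : ℝ) (k : ℤ) : MeasurableSet (cell τ k) := measurableSet_Ico

theorem pairwise_disjoint_cell (hτ : 0 < τ) : Pairwise (Disjoint on cell τ) := fun _ _ hkl =>
  disjoint_left.2 fun _ hk hl => hkl (((mem_cell_iff hτ).1 hk).symm.trans ((mem_cell_iff hτ).1 hl))

theorem lintegral_eq_tsum_cell (hτ : 0 < τ) (f : ℝ → ℝ≥0∞) :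
    ∫⁻ x, f x = ∑' k, ∫⁻ x in cell τ k, f x := by
  have hcover : ⋃ k, cell τ k = univ :=
    eq_univ_of_forall fun x => mem_iUnion.2 ⟨_, (mem_cell_iff hτ).2 rfl⟩
  rw [← lintegral_iUnion (measurableSet_cell τ) (pairwise_disjoint_cell hτ), hcover,
    Measure.restrict_univ]

theorem projPC_of_mem_cell (hτ : 0 < τ) (u : ℝ → ℝ) {x : ℝ} {k : ℤ} (hx : x ∈ cell τ k) :
    projPC τ u x = ⨍ t in cell τ k, u t := by
  rw [projPC, (mem_cell_iff hτ).1 hx, setAverage_eq, measureReal_def, volume_cell,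
    ENNReal.toReal_ofReal hτ.le, smul_eq_mul, one_div, cell, setIntegral_congr_set Ico_ae_eq_Ioc]

theorem measurable_projPC (τ : ℝ) (u : ℝ → ℝ) : Measurable (projPC τ u) :=
  (Measurable.of_discrete (f := fun k : ℤ =>
      (1 / τ) * ∫ t in Ioc ((k : ℝ) * τ) ((k + 1 : ℝ) * τ), u t)).comp
    (Int.measurable_floor.comp (measurable_id.div_const τ))

end Cells

section Slobodetski

variable {u : ℝ → ℝ}

noncomputable def slobKernel (u : ℝ → ℝ) (x t : ℝ) : ℝ≥0∞ :=
  ENNReal.ofReal ((u x - u t) ^ 2 / |x - t| ^ 2)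

theorem measurable_slobKernel (hu : Measurable u) : Measurable (uncurry (slobKernel u)) := by
  unfold slobKernel; fun_prop

theorem ofReal_sq_sub_le_mul_slobKernel {x t d : ℝ} (h : |x - t| ≤ d) :
    ENNReal.ofReal ((u x - u t) ^ 2) ≤ ENNReal.ofReal (d ^ 2) * slobKernel u x t := by
  rcases eq_or_ne x t with rfl | hxt
  · simp
  rw [slobKernel, ← ENNReal.ofReal_mul (by positivity)]
  refine ENNReal.ofReal_le_ofReal ?_
  calc (u x - u t) ^ 2 = |x - t| ^ 2 * ((u x - u t) ^ 2 / |x - t| ^ 2) := by field_simp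
    _ ≤ d ^ 2 * ((u x - u t) ^ 2 / |x - t| ^ 2) := by gcongr

theorem tsum_setLIntegral_setLIntegral_slobKernel_le {A B : ℤ → Set ℝ}
    (hA : ∀ k, MeasurableSet (A k)) (hd : Pairwise (Disjoint on A)) :
    ∑' k, ∫⁻ x in A k, ∫⁻ t in B k, slobKernel u x t ≤ slobHalfSq u :=
  calc ∑' k, ∫⁻ x in A k, ∫⁻ t in B k, slobKernel u x t
      ≤ ∑' k, ∫⁻ x in A k, ∫⁻ t, slobKernel u x t :=
        ENNReal.tsum_le_tsum fun _ => lintegral_mono fun _ => setLIntegral_le_lintegral _ _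
    _ = ∫⁻ x in ⋃ k, A k, ∫⁻ t, slobKernel u x t := (lintegral_iUnion hA hd _).symm
    _ ≤ slobHalfSq u := setLIntegral_le_lintegral _ _

noncomputable def shiftDiffSq (u : ℝ → ℝ) (y : ℝ) : ℝ≥0∞ :=
  ∫⁻ x, ENNReal.ofReal ((u x - u (x - y)) ^ 2)

theorem shiftDiffSq_abs (u : ℝ → ℝ) (y : ℝ) : shiftDiffSq u |y| = shiftDiffSq u y := by
  rcases abs_cases y with ⟨hy, -⟩ | ⟨hy, -⟩
  · rw [hy]
  rw [hy, shiftDiffSq, shiftDiffSq, ← lintegral_sub_right_eq_self _ y]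
  congr! 3 with x
  rw [sub_neg_eq_add, sub_add_cancel, ← neg_sub, neg_sq]

theorem measurable_slobKernel_sub (hu : Measurable u) :
    Measurable fun p : ℝ × ℝ => slobKernel u p.1 (p.1 - p.2) :=
  (measurable_slobKernel hu).comp (measurable_fst.prodMk (measurable_fst.sub measurable_snd))

theorem slobHalfSq_eq_lintegral_shift (hu : Measurable u) :
    slobHalfSq u = ∫⁻ s, ∫⁻ x, slobKernel u x (x - s) := by
  have hshift : ∀ x, ∫⁻ t, slobKernel u x t = ∫⁻ s, slobKernel u x (x - s) := fun x =>
    (lintegral_sub_left_eq_self _ x).symm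
  exact (lintegral_congr hshift).trans
    (lintegral_lintegral_swap (measurable_slobKernel_sub hu).aemeasurable)

theorem shiftDiffSq_le_mul_lintegral_slobKernel {s d : ℝ} (h : |s| ≤ d) :
    shiftDiffSq u s ≤ ENNReal.ofReal (d ^ 2) * ∫⁻ x, slobKernel u x (x - s) := by
  rw [shiftDiffSq, ← lintegral_const_mul' _ _ ofReal_ne_top]
  exact lintegral_mono fun x => ofReal_sq_sub_le_mul_slobKernel (by rwa [sub_sub_cancel x s])

theorem shiftDiffSq_le_add (hu : Measurable u) (y s : ℝ) :
    shiftDiffSq u y ≤ 2 * shiftDiffSq u s + 2 * shiftDiffSq u (y - s) := by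
  calc shiftDiffSq u y
      = ∫⁻ x, ENNReal.ofReal (((u x - u (x - s)) + (u (x - s) - u (x - s - (y - s)))) ^ 2) := by
        simp only [shiftDiffSq, sub_sub_sub_cancel_right, sub_add_sub_cancel]
    _ ≤ 2 * shiftDiffSq u s + 2 * ∫⁻ x, ENNReal.ofReal ((u (x - s) - u (x - s - (y - s))) ^ 2) :=
        lintegral_ofReal_sq_add_le (by fun_prop)
    _ = 2 * shiftDiffSq u s + 2 * shiftDiffSq u (y - s) := by
        rw [lintegral_sub_right_eq_self (fun x => ENNReal.ofReal ((u x - u (x - (y - s))) ^ 2)) s]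
        rfl

theorem shiftDiffSq_le_of_pos (hu : Measurable u) {y : ℝ} (hy : 0 < y) :
    shiftDiffSq u y ≤ 4 * ENNReal.ofReal y * slobHalfSq u := by
  set G : ℝ → ℝ≥0∞ := fun s => ∫⁻ x, slobKernel u x (x - s)
  have hG : Measurable G := (measurable_slobKernel_sub hu).lintegral_prod_left'
  have hpt : ∀ s ∈ Ioc 0 y,
      shiftDiffSq u y ≤ ENNReal.ofReal (y ^ 2) * (2 * G s + 2 * G (y - s)) := by
    rintro s ⟨hs0, hsy⟩
    calc shiftDiffSq u y ≤ 2 * shiftDiffSq u s + 2 * shiftDiffSq u (y - s) :=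
          shiftDiffSq_le_add hu y s
      _ ≤ 2 * (ENNReal.ofReal (y ^ 2) * G s) + 2 * (ENNReal.ofReal (y ^ 2) * G (y - s)) := by
          gcongr <;> refine shiftDiffSq_le_mul_lintegral_slobKernel (abs_le.2 ⟨?_, ?_⟩) <;> linarith
      _ = ENNReal.ofReal (y ^ 2) * (2 * G s + 2 * G (y - s)) := by ring
  have key : ENNReal.ofReal y * shiftDiffSq u y ≤
      ENNReal.ofReal y * (4 * ENNReal.ofReal y * slobHalfSq u) :=
    calc ENNReal.ofReal y * shiftDiffSq u y = ∫⁻ _ in Ioc 0 y, shiftDiffSq u y := by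
          rw [setLIntegral_const, Real.volume_Ioc, sub_zero, mul_comm]
      _ ≤ ∫⁻ s in Ioc 0 y, ENNReal.ofReal (y ^ 2) * (2 * G s + 2 * G (y - s)) :=
          setLIntegral_mono' measurableSet_Ioc hpt
      _ ≤ ENNReal.ofReal (y ^ 2) * ∫⁻ s, (2 * G s + 2 * G (y - s)) := by
          rw [lintegral_const_mul' _ _ ofReal_ne_top]
          exact mul_le_mul_right (setLIntegral_le_lintegral _ _) _
      _ = ENNReal.ofReal (y ^ 2) * (4 * slobHalfSq u) := by
          rw [lintegral_add_left (hG.const_mul 2), lintegral_const_mul' _ _ ofNat_ne_top,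
            lintegral_const_mul' _ _ ofNat_ne_top,
            lintegral_sub_left_eq_self G y, ← slobHalfSq_eq_lintegral_shift hu]
          ring
      _ = ENNReal.ofReal y * (4 * ENNReal.ofReal y * slobHalfSq u) := by
          rw [sq, ENNReal.ofReal_mul hy.le]
          ring
  exact (ENNReal.mul_le_mul_iff_right (by simpa using hy) ofReal_ne_top).1 key

theorem shiftDiffSq_le (hu : Measurable u) (y : ℝ) :
    shiftDiffSq u y ≤ 4 * ENNReal.ofReal |y| * slobHalfSq u := by
  rcases eq_or_ne y 0 with rfl | hy
  · simp [shiftDiffSq]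
  rw [← shiftDiffSq_abs]
  exact shiftDiffSq_le_of_pos hu (abs_pos.2 hy)

end Slobodetski

section Projection

variable {τ : ℝ} {u : ℝ → ℝ}

theorem ofReal_sq_sub_cellAverage_le (hτ : 0 < τ) (hu : MemLp u 2) (k : ℤ) (c : ℝ) :
    ENNReal.ofReal ((c - ⨍ t in cell τ k, u t) ^ 2) ≤
      (∫⁻ t in cell τ k, ENNReal.ofReal ((c - u t) ^ 2)) / ENNReal.ofReal τ := by
  rw [← volume_cell τ k, ← setLAverage_eq]
  exact ofReal_sq_sub_setAverage_le (by simpa [volume_cell] using hτ) (by simp [volume_cell])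
    (hu.restrict _) c

theorem ofReal_sq_sub_cellAverage_le_mul_slobKernel (hτ : 0 < τ) (hu : MemLp u 2) {k : ℤ}
    {x d : ℝ} (hd : ∀ t ∈ cell τ k, |x - t| ≤ d) :
    ENNReal.ofReal ((u x - ⨍ t in cell τ k, u t) ^ 2) ≤
      ENNReal.ofReal (d ^ 2 / τ) * ∫⁻ t in cell τ k, slobKernel u x t :=
  calc ENNReal.ofReal ((u x - ⨍ t in cell τ k, u t) ^ 2)
      ≤ (∫⁻ t in cell τ k, ENNReal.ofReal ((u x - u t) ^ 2)) / ENNReal.ofReal τ :=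
        ofReal_sq_sub_cellAverage_le hτ hu k (u x)
    _ ≤ (ENNReal.ofReal (d ^ 2) * ∫⁻ t in cell τ k, slobKernel u x t) / ENNReal.ofReal τ := by
        rw [← lintegral_const_mul' _ _ ofReal_ne_top]
        gcongr ?_ / _
        exact setLIntegral_mono' (measurableSet_cell τ k) fun t ht =>
          ofReal_sq_sub_le_mul_slobKernel (hd t ht)
    _ = ENNReal.ofReal (d ^ 2 / τ) * ∫⁻ t in cell τ k, slobKernel u x t := by
        rw [ENNReal.ofReal_div_of_pos hτ, div_eq_mul_inv, div_eq_mul_inv, mul_right_comm]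

theorem lintegral_sq_sub_projPC_le (hτ : 0 < τ) (hu : MemLp u 2) :
    ∫⁻ x, ENNReal.ofReal ((u x - projPC τ u x) ^ 2) ≤ ENNReal.ofReal τ * slobHalfSq u := by
  have hcell : ∀ k, ∀ x ∈ cell τ k, ENNReal.ofReal ((u x - projPC τ u x) ^ 2) ≤
      ENNReal.ofReal τ * ∫⁻ t in cell τ k, slobKernel u x t := by
    intro k x hx
    rw [projPC_of_mem_cell hτ u hx]
    convert ofReal_sq_sub_cellAverage_le_mul_slobKernel (d := τ) hτ hu fun t ht => ?_ using 3
    · field_simp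
    · obtain ⟨hx₁, hx₂⟩ := hx
      obtain ⟨ht₁, ht₂⟩ := ht
      exact abs_sub_le_iff.2 ⟨by linarith, by linarith⟩
  calc ∫⁻ x, ENNReal.ofReal ((u x - projPC τ u x) ^ 2)
      = ∑' k, ∫⁻ x in cell τ k, ENNReal.ofReal ((u x - projPC τ u x) ^ 2) :=
        lintegral_eq_tsum_cell hτ _
    _ ≤ ∑' k, ∫⁻ x in cell τ k, ENNReal.ofReal τ * ∫⁻ t in cell τ k, slobKernel u x t :=
        ENNReal.tsum_le_tsum fun k => setLIntegral_mono' (measurableSet_cell τ k) (hcell k)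
    _ = ENNReal.ofReal τ * ∑' k, ∫⁻ x in cell τ k, ∫⁻ t in cell τ k, slobKernel u x t := by
        simp only [lintegral_const_mul' _ _ ofReal_ne_top, ENNReal.tsum_mul_left]
    _ ≤ ENNReal.ofReal τ * slobHalfSq u := by
        gcongr
        exact tsum_setLIntegral_setLIntegral_slobKernel_le (measurableSet_cell τ)
          (pairwise_disjoint_cell hτ)

theorem ofReal_sq_cellAverage_sub_le (hτ : 0 < τ) (hu : MemLp u 2) (k : ℤ) :
    ENNReal.ofReal (((⨍ t in cell τ k, u t) - ⨍ t in cell τ (k - 1), u t) ^ 2) ≤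
      4 * ∫⁻ t in cell τ (k - 1), ∫⁻ s in cell τ k, slobKernel u t s := by
  have hinner : ∀ t ∈ cell τ (k - 1), ENNReal.ofReal (((⨍ s in cell τ k, u s) - u t) ^ 2) ≤
      ENNReal.ofReal (4 * τ) * ∫⁻ s in cell τ k, slobKernel u t s := by
    intro t ht
    rw [← neg_sub, neg_sq]
    convert ofReal_sq_sub_cellAverage_le_mul_slobKernel (d := 2 * τ) hτ hu fun s hs => ?_
      using 3
    · field_simp
      ring
    · obtain ⟨ht₁, ht₂⟩ := ht
      obtain ⟨hs₁, hs₂⟩ := hs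
      push_cast at ht₁ ht₂
      exact abs_sub_le_iff.2 ⟨by linarith, by linarith⟩
  calc ENNReal.ofReal (((⨍ t in cell τ k, u t) - ⨍ t in cell τ (k - 1), u t) ^ 2)
      ≤ (∫⁻ t in cell τ (k - 1), ENNReal.ofReal (((⨍ s in cell τ k, u s) - u t) ^ 2)) /
          ENNReal.ofReal τ :=
        ofReal_sq_sub_cellAverage_le hτ hu (k - 1) _
    _ ≤ (ENNReal.ofReal (4 * τ) * ∫⁻ t in cell τ (k - 1), ∫⁻ s in cell τ k, slobKernel u t s) /
          ENNReal.ofReal τ := by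
        rw [← lintegral_const_mul' _ _ ofReal_ne_top]
        gcongr ?_ / _
        exact setLIntegral_mono' (measurableSet_cell τ _) hinner
    _ = 4 * ∫⁻ t in cell τ (k - 1), ∫⁻ s in cell τ k, slobKernel u t s := by
        rw [ENNReal.ofReal_mul zero_le_four, ENNReal.ofReal_ofNat, mul_comm 4, mul_assoc,
          mul_comm (ENNReal.ofReal τ),
          ENNReal.mul_div_cancel_right (by simpa using hτ) ofReal_ne_top]

theorem setLIntegral_cell_sq_projPC_sub_le (hτ : 0 < τ) (u : ℝ → ℝ) {y : ℝ} (hy₀ : 0 ≤ y)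
    (hyτ : y ≤ τ) (k : ℤ) :
    ∫⁻ x in cell τ k, ENNReal.ofReal ((projPC τ u x - projPC τ u (x - y)) ^ 2) ≤
      ENNReal.ofReal y *
        ENNReal.ofReal (((⨍ t in cell τ k, u t) - ⨍ t in cell τ (k - 1), u t) ^ 2) := by
  have hpt : ∀ x ∈ cell τ k,
      ENNReal.ofReal ((projPC τ u x - projPC τ u (x - y)) ^ 2) ≤
        (Ico (k * τ) (k * τ + y)).indicator (fun _ =>
          ENNReal.ofReal (((⨍ t in cell τ k, u t) - ⨍ t in cell τ (k - 1), u t) ^ 2)) x := by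
    intro x hx
    rw [projPC_of_mem_cell hτ u hx]
    obtain ⟨hx₁, hx₂⟩ := hx
    by_cases hxy : x < k * τ + y
    · have hprev : x - y ∈ cell τ (k - 1) := by
        constructor <;> push_cast <;> linarith
      rw [projPC_of_mem_cell hτ u hprev, indicator_of_mem (mem_Ico.2 ⟨hx₁, hxy⟩)]
    · have hsame : x - y ∈ cell τ k := by
        constructor <;> linarith
      simp [projPC_of_mem_cell hτ u hsame]
  calc _ ≤ ∫⁻ x, (Ico (k * τ) (k * τ + y)).indicator (fun _ =>
          ENNReal.ofReal (((⨍ t in cell τ k, u t) - ⨍ t in cell τ (k - 1), u t) ^ 2)) x :=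
        (setLIntegral_mono' (measurableSet_cell τ k) hpt).trans (setLIntegral_le_lintegral _ _)
    _ = _ := by
        rw [lintegral_indicator_const measurableSet_Ico, Real.volume_Ico, add_sub_cancel_left,
          mul_comm]

theorem shiftDiffSq_projPC_le_of_le (hτ : 0 < τ) (hu : MemLp u 2) {y : ℝ} (hy₀ : 0 ≤ y)
    (hyτ : y ≤ τ) : shiftDiffSq (projPC τ u) y ≤ 4 * ENNReal.ofReal y * slobHalfSq u :=
  calc shiftDiffSq (projPC τ u) y
      = ∑' k, ∫⁻ x in cell τ k, ENNReal.ofReal ((projPC τ u x - projPC τ u (x - y)) ^ 2) :=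
        lintegral_eq_tsum_cell hτ _
    _ ≤ ∑' k : ℤ, ENNReal.ofReal y *
          (4 * ∫⁻ t in cell τ (k - 1), ∫⁻ s in cell τ k, slobKernel u t s) :=
        ENNReal.tsum_le_tsum fun k => (setLIntegral_cell_sq_projPC_sub_le hτ u hy₀ hyτ k).trans
          (by gcongr; exact ofReal_sq_cellAverage_sub_le hτ hu k)
    _ ≤ 4 * ENNReal.ofReal y * slobHalfSq u := by
        rw [ENNReal.tsum_mul_left, ENNReal.tsum_mul_left, ← mul_assoc, mul_comm _ (4 : ℝ≥0∞)]
        gcongr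
        exact tsum_setLIntegral_setLIntegral_slobKernel_le (fun _ => measurableSet_cell τ _)
          ((pairwise_disjoint_cell hτ).comp_of_injective (sub_left_injective (b := 1)))

theorem shiftDiffSq_le_two_mul_add {f g : ℝ → ℝ} (hf : Measurable f) (hg : Measurable g) (y : ℝ) :
    shiftDiffSq f y ≤ 2 * shiftDiffSq g y + 8 * ∫⁻ x, ENNReal.ofReal ((g x - f x) ^ 2) := by
  have hsymm : ∫⁻ x, ENNReal.ofReal ((f x - g x) ^ 2) = ∫⁻ x, ENNReal.ofReal ((g x - f x) ^ 2) := by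
    simp only [← neg_sub (g _), neg_sq]
  have hshift : ∫⁻ x, ENNReal.ofReal ((g (x - y) - f (x - y)) ^ 2) =
      ∫⁻ x, ENNReal.ofReal ((g x - f x) ^ 2) :=
    lintegral_sub_right_eq_self (fun x => ENNReal.ofReal ((g x - f x) ^ 2)) y
  calc shiftDiffSq f y
      = ∫⁻ x, ENNReal.ofReal (((g x - g (x - y)) +
          ((f x - g x) + (g (x - y) - f (x - y)))) ^ 2) := by
        unfold shiftDiffSq
        congr! 3 with x
        ring
    _ ≤ 2 * shiftDiffSq g y +
          2 * ∫⁻ x, ENNReal.ofReal (((f x - g x) + (g (x - y) - f (x - y))) ^ 2) :=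
        lintegral_ofReal_sq_add_le (f := fun x => g x - g (x - y)) (by fun_prop)
    _ ≤ 2 * shiftDiffSq g y + 2 * (2 * (∫⁻ x, ENNReal.ofReal ((f x - g x) ^ 2)) +
          2 * ∫⁻ x, ENNReal.ofReal ((g (x - y) - f (x - y)) ^ 2)) := by
        gcongr
        exact lintegral_ofReal_sq_add_le (f := fun x => f x - g x) (hf.sub hg).aemeasurable
    _ = 2 * shiftDiffSq g y + 8 * ∫⁻ x, ENNReal.ofReal ((g x - f x) ^ 2) := by
        rw [hsymm, hshift]
        ring

theorem shiftDiffSq_projPC_le (hτ : 0 < τ) (hu : Measurable u) (hu₂ : MemLp u 2) (y : ℝ) :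
    shiftDiffSq (projPC τ u) y ≤ 16 * ENNReal.ofReal |y| * slobHalfSq u := by
  rw [← shiftDiffSq_abs]
  rcases le_total |y| τ with hyτ | hτy
  · calc shiftDiffSq (projPC τ u) |y| ≤ 4 * ENNReal.ofReal |y| * slobHalfSq u :=
          shiftDiffSq_projPC_le_of_le hτ hu₂ (abs_nonneg y) hyτ
      _ ≤ 16 * ENNReal.ofReal |y| * slobHalfSq u := by gcongr; norm_num
  calc shiftDiffSq (projPC τ u) |y|
      ≤ 2 * shiftDiffSq u |y| + 8 * ∫⁻ x, ENNReal.ofReal ((u x - projPC τ u x) ^ 2) :=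
        shiftDiffSq_le_two_mul_add (measurable_projPC τ u) hu |y|
    _ ≤ 2 * (4 * ENNReal.ofReal |y| * slobHalfSq u) + 8 * (ENNReal.ofReal |y| * slobHalfSq u) := by
        gcongr
        · simpa using shiftDiffSq_le hu |y|
        · exact (lintegral_sq_sub_projPC_le hτ hu₂).trans (by gcongr)
    _ = 16 * ENNReal.ofReal |y| * slobHalfSq u := by ring

end Projection

theorem projPC_congr_ae {u v : ℝ → ℝ} (h : u =ᵐ[volume] v) (τ : ℝ) : projPC τ u = projPC τ v :=
  funext fun _ => by rw [projPC, projPC, integral_congr_ae (ae_restrict_of_ae h)]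

theorem slobHalfSq_congr_ae {u v : ℝ → ℝ} (h : u =ᵐ[volume] v) : slobHalfSq u = slobHalfSq v :=
  lintegral_congr_ae <| h.mono fun x hx =>
    lintegral_congr_ae <| h.mono fun t ht => by simp only [hx, ht]

/-- **Projection onto piecewise constants is bounded from `H^{1/2}` to weak `H^{1/2}`,
uniformly in `τ`:** there is `C > 0` such that for all `τ > 0` and all `u ∈ L²(ℝ)` with
finite Slobodetski seminorm, `‖P_τ u − (P_τ u)(· − y)‖_{L²}² ≤ C² |y| |u|²_{H^{1/2}}`
for all `y ∈ ℝ`. -/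
theorem projPC_weakHalf_bound :
    ∃ C > (0 : ℝ), ∀ τ : ℝ, 0 < τ → ∀ u : ℝ → ℝ, MemLp u 2 volume →
      slobHalfSq u < ⊤ →
      ∀ y : ℝ,
        (∫⁻ x : ℝ, ENNReal.ofReal ((projPC τ u x - projPC τ u (x - y)) ^ 2))
          ≤ ENNReal.ofReal (C ^ 2 * |y|) * slobHalfSq u := by
  refine ⟨4, by norm_num, fun τ hτ u hu _ y => ?_⟩
  obtain ⟨v, hv, huv⟩ := hu.aestronglyMeasurable.aemeasurable
  rw [projPC_congr_ae huv, slobHalfSq_congr_ae huv, ENNReal.ofReal_mul (by norm_num)]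
  calc shiftDiffSq (projPC τ v) y ≤ 16 * ENNReal.ofReal |y| * slobHalfSq v :=
        shiftDiffSq_projPC_le hτ hv (hu.ae_eq huv) y
    _ = ENNReal.ofReal (4 ^ 2) * ENNReal.ofReal |y| * slobHalfSq v := by norm_num
end

section
/- There exists a constant C > 0, independent of α, β, τ and N, with the following property. Let α, β, τ > 0, let N ≥ 1 be an integer, and set T = Nτ. Let u : [0,T] → ℝ be continuous, affine on each interval [kτ, (k+1)τ] (0 ≤ k < N), with u(0) = u(T) = 0, and let v : [0,T] → ℝ be its upwinded interpolant, i.e. v is continuous, v(kτ) = u(kτ) for all 0 ≤ k ≤ N, and on each interval [kτ, (k+1)τ] there exist constants c₁, c₂ with v(t) = c₁ + c₂ exp(−βt/α). Then (1/C) ∫₀ᵀ |u|² ≤ ∫₀ᵀ |v|² ≤ C ∫₀ᵀ |u|². -/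
open MeasureTheory

/-- `u` is affine on each interval `[kτ, (k+1)τ]`, `0 ≤ k < N`. -/
def PWAffine (τ : ℝ) (N : ℕ) (u : ℝ → ℝ) : Prop :=
  ∀ k : ℕ, k < N → ∃ c₁ c₂ : ℝ,
    ∀ t ∈ Set.Icc ((k : ℝ) * τ) (((k : ℝ) + 1) * τ), u t = c₁ + c₂ * t

/-- `v` is of the upwinded form `c₁ + c₂ exp(−βt/α)` on each interval
`[kτ, (k+1)τ]`, `0 ≤ k < N`. -/
def Upwind (α β τ : ℝ) (N : ℕ) (v : ℝ → ℝ) : Prop :=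
  ∀ k : ℕ, k < N → ∃ c₁ c₂ : ℝ,
    ∀ t ∈ Set.Icc ((k : ℝ) * τ) (((k : ℝ) + 1) * τ),
      v t = c₁ + c₂ * Real.exp (-(β * t) / α)

/-!
On a cell `[p, q]` with endpoint values `a, b`, the affine `u` has `∫ u² = (q - p)(a² + ab + b²)/3`,
which lies between `(q - p)(a² + b²)/6` and `(q - p)(a² + b²)/2`. The upwinded `v` is monotone
between `a` and `b`, so `∫ v² ≤ (q - p)(a² + b²)`. Conversely `v = b + c (φ - φ q)` with
`φ t = exp(-βt/α)` convex and decreasing, and by convexity `|c| (φ - φ q)` either exceeds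
`3|b|/2` on the first quarter of the cell or stays below `|b|/2` on the last quarter; either way
`v² ≥ b²/4` there and `∫ v² ≥ (q - p) b²/16`. The lower bound for `v` only sees the right
endpoint of each cell, but since `u(0) = u(T) = 0`, summing `u(kτ)²` over left and over right
endpoints gives the same total. Hence `C = 16` works.
-/

open Set

lemma sum_range_succ_eq_sum_range_of_eq_zero {M : Type*} [AddCommMonoid M] {f : ℕ → M} {N : ℕ}
    (h₀ : f 0 = 0) (hN : f N = 0) :
    ∑ k ∈ Finset.range N, f (k + 1) = ∑ k ∈ Finset.range N, f k := by
  have h := Finset.sum_range_succ' f N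
  rw [Finset.sum_range_succ, hN, h₀, add_zero, add_zero] at h
  exact h.symm

lemma sq_div_four_le_add_sq {b d : ℝ} (h : |d| ≤ |b| / 2 ∨ 3 * |b| / 2 ≤ |d|) :
    b ^ 2 / 4 ≤ (b + d) ^ 2 := by
  have hbd : |b| ≤ 2 * |b + d| := by
    rcases h with h | h
    · linarith [abs_sub_abs_le_abs_add b d]
    · have h' := abs_sub_abs_le_abs_add d b
      rw [add_comm d b] at h'
      linarith
  nlinarith [sq_abs b, sq_abs (b + d), abs_nonneg b]

lemma ConvexOn.sub_right_le_mul_sub {φ : ℝ → ℝ} {y q t : ℝ} (hφ : ConvexOn ℝ (Icc y q) φ)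
    (hyq : y < q) (ht : t ∈ Icc y q) :
    φ t - φ q ≤ (q - t) / (q - y) * (φ y - φ q) := by
  set μ := (q - t) / (q - y)
  have hμ₀ : 0 ≤ μ := div_nonneg (by linarith [ht.2]) (by linarith)
  have hμ₁ : μ ≤ 1 := (div_le_one (by linarith)).2 (by linarith [ht.1])
  have hconv := hφ.2 (left_mem_Icc.2 hyq.le) (right_mem_Icc.2 hyq.le) hμ₀ (sub_nonneg.2 hμ₁)
    (add_sub_cancel μ 1)
  have ht_eq : μ • y + (1 - μ) • q = t := by
    have hqy : q - y ≠ 0 := (sub_pos.2 hyq).ne'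
    simp only [smul_eq_mul, μ]
    field_simp
    ring
  rw [ht_eq, smul_eq_mul, smul_eq_mul] at hconv
  linarith

section Cell

variable {p q : ℝ}

lemma mul_le_integral_of_le_on_subinterval {f : ℝ → ℝ} {a b m : ℝ}
    (hf : ContinuousOn f (Icc p q)) (hf₀ : ∀ t ∈ Icc p q, 0 ≤ f t)
    (hpa : p ≤ a) (hab : a ≤ b) (hbq : b ≤ q) (hm : ∀ t ∈ Icc a b, m ≤ f t) :
    (b - a) * m ≤ ∫ t in p..q, f t := by
  have hf_ab : IntervalIntegrable f volume a b :=
    (hf.mono (Icc_subset_Icc hpa hbq)).intervalIntegrable_of_Icc hab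
  have hf_pq : IntervalIntegrable f volume p q :=
    hf.intervalIntegrable_of_Icc (hpa.trans (hab.trans hbq))
  have hf₀_ae : 0 ≤ᵐ[volume.restrict (Ioc p q)] f :=
    (ae_restrict_mem measurableSet_Ioc).mono fun t ht => hf₀ t (Ioc_subset_Icc_self ht)
  calc (b - a) * m = ∫ _ in a..b, m := by simp
    _ ≤ ∫ t in a..b, f t := intervalIntegral.integral_mono_on hab intervalIntegrable_const hf_ab hm
    _ ≤ ∫ t in p..q, f t := intervalIntegral.integral_mono_interval hpa hab hbq hf₀_ae hf_pq

lemma integral_le_mul_of_le_on {f : ℝ → ℝ} {M : ℝ} (hpq : p ≤ q) (hf : ContinuousOn f (Icc p q))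
    (hM : ∀ t ∈ Icc p q, f t ≤ M) :
    ∫ t in p..q, f t ≤ (q - p) * M := by
  simpa using intervalIntegral.integral_mono_on hpq
    (hf.intervalIntegrable_of_Icc (μ := volume) hpq) intervalIntegrable_const hM

lemma integral_sq_affine (c₁ c₂ : ℝ) :
    ∫ t in p..q, (c₁ + c₂ * t) ^ 2
      = (q - p) * ((c₁ + c₂ * p) ^ 2 + (c₁ + c₂ * p) * (c₁ + c₂ * q) + (c₁ + c₂ * q) ^ 2) / 3 := by
  have hF : ∀ t ∈ uIcc p q,
      HasDerivAt (fun t => c₁ ^ 2 * t + c₁ * c₂ * t ^ 2 + c₂ ^ 2 * t ^ 3 / 3)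
        ((c₁ + c₂ * t) ^ 2) t := fun t _ =>
    ((((hasDerivAt_id' t).const_mul (c₁ ^ 2)).add ((hasDerivAt_pow 2 t).const_mul (c₁ * c₂))).add
      (((hasDerivAt_pow 3 t).const_mul (c₂ ^ 2)).div_const 3)).congr_deriv (by norm_num; ring)
  rw [intervalIntegral.integral_eq_sub_of_hasDerivAt hF
    ((by fun_prop : Continuous fun t => (c₁ + c₂ * t) ^ 2).intervalIntegrable _ _)]
  ring

lemma integral_sq_eq_of_eqOn {u g : ℝ → ℝ} (hpq : p ≤ q) (hu : ∀ t ∈ Icc p q, u t = g t) :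
    ∫ t in p..q, u t ^ 2 = ∫ t in p..q, g t ^ 2 :=
  intervalIntegral.integral_congr fun t ht => by
    rw [uIcc_of_le hpq] at ht
    simp only [hu t ht]

lemma integral_sq_bounds_of_affine {u : ℝ → ℝ} {c₁ c₂ : ℝ} (hpq : p ≤ q)
    (hu : ∀ t ∈ Icc p q, u t = c₁ + c₂ * t) :
    (q - p) * (u p ^ 2 + u q ^ 2) ≤ 6 * ∫ t in p..q, u t ^ 2 ∧
      2 * ∫ t in p..q, u t ^ 2 ≤ (q - p) * (u p ^ 2 + u q ^ 2) := by
  rw [integral_sq_eq_of_eqOn hpq hu, integral_sq_affine, hu p (left_mem_Icc.2 hpq),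
    hu q (right_mem_Icc.2 hpq)]
  set a := c₁ + c₂ * p
  set b := c₁ + c₂ * q
  have hqp : 0 ≤ q - p := sub_nonneg.2 hpq
  constructor
  · nlinarith [mul_nonneg hqp (sq_nonneg (a + b))]
  · nlinarith [mul_nonneg hqp (sq_nonneg (a - b))]

variable {φ v : ℝ → ℝ} {c₁ c₂ : ℝ}

lemma continuousOn_sq_of_eqOn_affine_comp (hφc : ContinuousOn φ (Icc p q))
    (hv : ∀ t ∈ Icc p q, v t = c₁ + c₂ * φ t) :
    ContinuousOn (fun t => v t ^ 2) (Icc p q) :=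
  ((continuousOn_const.add (continuousOn_const.mul hφc)).congr hv).pow 2

lemma integral_sq_le_of_antitoneOn (hpq : p ≤ q) (hφc : ContinuousOn φ (Icc p q))
    (hφ : AntitoneOn φ (Icc p q)) (hv : ∀ t ∈ Icc p q, v t = c₁ + c₂ * φ t) :
    ∫ t in p..q, v t ^ 2 ≤ (q - p) * (v p ^ 2 + v q ^ 2) := by
  have hp := left_mem_Icc.2 hpq
  have hq := right_mem_Icc.2 hpq
  refine integral_le_mul_of_le_on hpq (continuousOn_sq_of_eqOn_affine_comp hφc hv) fun t ht => ?_
  have hbetween : 0 ≤ (v t - v q) * (v p - v t) := by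
    rw [hv t ht, hv p hp, hv q hq]
    have h : (c₁ + c₂ * φ t - (c₁ + c₂ * φ q)) * (c₁ + c₂ * φ p - (c₁ + c₂ * φ t))
        = c₂ ^ 2 * ((φ t - φ q) * (φ p - φ t)) := by ring
    rw [h]
    exact mul_nonneg (sq_nonneg c₂) (mul_nonneg (sub_nonneg.2 (hφ ht hq ht.2))
      (sub_nonneg.2 (hφ hp ht ht.1)))
  nlinarith [sq_nonneg (v p - v q), sq_nonneg (v p + v q - v t)]

lemma sq_div_four_le_sq_on_first_or_last_quarter (hpq : p < q)
    (hφconv : ConvexOn ℝ (Icc p q) φ) (hφ : AntitoneOn φ (Icc p q))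
    (hv : ∀ t ∈ Icc p q, v t = c₁ + c₂ * φ t) :
    (∀ t ∈ Icc p (p + (q - p) / 4), v q ^ 2 / 4 ≤ v t ^ 2) ∨
      ∀ t ∈ Icc (q - (q - p) / 4) q, v q ^ 2 / 4 ≤ v t ^ 2 := by
  have hq := right_mem_Icc.2 hpq.le
  set b := v q with hb_def
  set y := p + (q - p) / 4 with hy_def
  have hy : y ∈ Icc p q := ⟨by linarith, by linarith⟩
  have hφ₀ : ∀ t ∈ Icc p q, 0 ≤ φ t - φ q := fun t ht => sub_nonneg.2 (hφ ht hq ht.2)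
  have hv_eq : ∀ t ∈ Icc p q, v t = b + c₂ * (φ t - φ q) := fun t ht => by
    rw [hv t ht, hb_def, hv q hq]; ring
  have habs : ∀ t ∈ Icc p q, |c₂ * (φ t - φ q)| = |c₂| * (φ t - φ q) := fun t ht => by
    rw [abs_mul, abs_of_nonneg (hφ₀ t ht)]
  by_cases hlarge : 3 * |b| / 2 ≤ |c₂| * (φ y - φ q)
  · refine Or.inl fun t ht => ?_
    have ht' : t ∈ Icc p q := ⟨ht.1, ht.2.trans hy.2⟩
    have hdom : |c₂| * (φ y - φ q) ≤ |c₂| * (φ t - φ q) :=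
      mul_le_mul_of_nonneg_left (by linarith [hφ ht' hy ht.2]) (abs_nonneg c₂)
    rw [hv_eq t ht']
    exact sq_div_four_le_add_sq (Or.inr (by rw [habs t ht']; linarith))
  · refine Or.inr fun t ht => ?_
    have ht' : t ∈ Icc p q := ⟨by linarith [ht.1], ht.2⟩
    have hchord := (hφconv.subset (Icc_subset_Icc_left hy.1) (convex_Icc y q))
      |>.sub_right_le_mul_sub (by linarith) (⟨by linarith [ht.1], ht.2⟩ : t ∈ Icc y q)
    have hratio : (q - t) / (q - y) ≤ 1 / 3 := by
      rw [div_le_iff₀ (by linarith)]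
      linarith [ht.1, hy_def]
    have hsmall : φ t - φ q ≤ (φ y - φ q) / 3 := by
      nlinarith [hφ₀ y hy]
    rw [hv_eq t ht']
    refine sq_div_four_le_add_sq (Or.inl ?_)
    rw [habs t ht']
    nlinarith [mul_le_mul_of_nonneg_left hsmall (abs_nonneg c₂)]

lemma le_integral_sq_of_convexOn_of_antitoneOn (hpq : p ≤ q) (hφc : ContinuousOn φ (Icc p q))
    (hφconv : ConvexOn ℝ (Icc p q) φ) (hφ : AntitoneOn φ (Icc p q))
    (hv : ∀ t ∈ Icc p q, v t = c₁ + c₂ * φ t) :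
    (q - p) * v q ^ 2 ≤ 16 * ∫ t in p..q, v t ^ 2 := by
  rcases hpq.eq_or_lt with rfl | hpq'
  · simp
  have hcont := continuousOn_sq_of_eqOn_affine_comp hφc hv
  have hnonneg : ∀ t ∈ Icc p q, 0 ≤ v t ^ 2 := fun t _ => sq_nonneg (v t)
  have hquarter : (q - p) / 4 * (v q ^ 2 / 4) ≤ ∫ t in p..q, v t ^ 2 := by
    rcases sq_div_four_le_sq_on_first_or_last_quarter hpq' hφconv hφ hv with h | h
    · simpa using mul_le_integral_of_le_on_subinterval hcont hnonneg le_rfl (by linarith)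
        (by linarith) h
    · simpa using mul_le_integral_of_le_on_subinterval hcont hnonneg (by linarith)
        (by linarith) le_rfl h
  linarith

end Cell

lemma convexOn_exp_neg_mul_div (α β : ℝ) :
    ConvexOn ℝ univ fun t => Real.exp (-(β * t) / α) := by
  convert! convexOn_exp.comp_linearMap (LinearMap.mul ℝ ℝ (-β / α)) using 1
  ext t
  simp only [Function.comp_apply, LinearMap.mul_apply']
  ring_nf

lemma antitone_exp_neg_mul_div {α β : ℝ} (hα : 0 < α) (hβ : 0 ≤ β) :
    Antitone fun t => Real.exp (-(β * t) / α) := fun s t hst => by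
  simp only [Real.exp_le_exp]
  exact div_le_div_of_nonneg_right (by nlinarith) hα.le

lemma integral_sq_bounds_of_upwind {α β p q c₁ c₂ : ℝ} {v : ℝ → ℝ} (hα : 0 < α) (hβ : 0 ≤ β)
    (hpq : p ≤ q) (hv : ∀ t ∈ Icc p q, v t = c₁ + c₂ * Real.exp (-(β * t) / α)) :
    (q - p) * v q ^ 2 ≤ 16 * (∫ t in p..q, v t ^ 2) ∧
      ∫ t in p..q, v t ^ 2 ≤ (q - p) * (v p ^ 2 + v q ^ 2) :=
  have hφc := (by fun_prop : Continuous fun t => Real.exp (-(β * t) / α)).continuousOn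
  have hφ := (antitone_exp_neg_mul_div hα hβ).antitoneOn (Icc p q)
  ⟨le_integral_sq_of_convexOn_of_antitoneOn hpq hφc
      ((convexOn_exp_neg_mul_div α β).subset (subset_univ _) (convex_Icc p q)) hφ hv,
    integral_sq_le_of_antitoneOn hpq hφc hφ hv⟩

lemma integral_eq_sum_integral_grid {f : ℝ → ℝ} {τ : ℝ} {N : ℕ} (hτ : 0 ≤ τ)
    (hf : ContinuousOn f (Icc 0 (N * τ))) :
    ∫ t in (0 : ℝ)..N * τ, f t = ∑ k ∈ Finset.range N, ∫ t in (k * τ : ℝ)..(k + 1) * τ, f t := by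
  have h := intervalIntegral.sum_integral_adjacent_intervals (μ := volume) (f := f)
    (a := fun k : ℕ => (k : ℝ) * τ) (n := N) fun k hk => by
      refine (hf.mono (Icc_subset_Icc (by positivity) ?_)).intervalIntegrable_of_Icc ?_
      · exact mul_le_mul_of_nonneg_right (by exact_mod_cast hk) hτ
      · exact mul_le_mul_of_nonneg_right (by simp) hτ
  push_cast at h
  simpa using h.symm

lemma integral_sq_cell_bounds {α β τ : ℝ} {N k : ℕ} {u v : ℝ → ℝ} (hα : 0 < α) (hβ : 0 ≤ β)
    (hτ : 0 ≤ τ) (hu : PWAffine τ N u) (hv : Upwind α β τ N v)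
    (hvu : ∀ k : ℕ, k ≤ N → v ((k : ℝ) * τ) = u ((k : ℝ) * τ)) (hk : k < N) :
    τ * (u (k * τ) ^ 2 + u ((k + 1 : ℕ) * τ) ^ 2)
        ≤ 6 * (∫ t in (k * τ : ℝ)..(k + 1) * τ, u t ^ 2) ∧
      2 * (∫ t in (k * τ : ℝ)..(k + 1) * τ, u t ^ 2)
        ≤ τ * (u (k * τ) ^ 2 + u ((k + 1 : ℕ) * τ) ^ 2) ∧
      τ * u ((k + 1 : ℕ) * τ) ^ 2 ≤ 16 * (∫ t in (k * τ : ℝ)..(k + 1) * τ, v t ^ 2) ∧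
      ∫ t in (k * τ : ℝ)..(k + 1) * τ, v t ^ 2
        ≤ τ * (u (k * τ) ^ 2 + u ((k + 1 : ℕ) * τ) ^ 2) := by
  have hle : (k : ℝ) * τ ≤ (k + 1) * τ := by nlinarith
  have hlen : ((k : ℝ) + 1) * τ - k * τ = τ := by ring
  obtain ⟨a₁, a₂, hua⟩ := hu k hk
  obtain ⟨b₁, b₂, hvb⟩ := hv k hk
  obtain ⟨hu₁, hu₂⟩ := integral_sq_bounds_of_affine hle hua
  obtain ⟨hv₁, hv₂⟩ := integral_sq_bounds_of_upwind hα hβ hle hvb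
  have hv_right : v ((k + 1) * τ) = u ((k + 1) * τ) := by exact_mod_cast hvu (k + 1) hk
  rw [hlen] at hu₁ hu₂ hv₁ hv₂
  rw [hvu k hk.le] at hv₂
  rw [hv_right] at hv₁ hv₂
  push_cast
  exact ⟨hu₁, hu₂, hv₁, hv₂⟩

/-- **`L²` equivalence of a piecewise affine function vanishing at the extremities and
its upwinded interpolant, uniformly in `α`, `β`, `τ`, `N`:** there is `C > 0` such that
for all `α, β, τ > 0`, all integers `N ≥ 1` with `T = Nτ`, all continuous `τ`-piecewise
affine `u` on `[0,T]` with `u(0) = u(T) = 0`, and `v` its upwinded interpolant,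
`(1/C) ∫₀ᵀ |u|² ≤ ∫₀ᵀ |v|² ≤ C ∫₀ᵀ |u|²`. -/
theorem upwind_interpolant_L2_equiv :
    ∃ C > (0 : ℝ), ∀ α β τ : ℝ, 0 < α → 0 < β → 0 < τ → ∀ N : ℕ, 1 ≤ N →
      ∀ u v : ℝ → ℝ,
        ContinuousOn u (Set.Icc 0 ((N : ℝ) * τ)) →
        PWAffine τ N u →
        u 0 = 0 → u ((N : ℝ) * τ) = 0 →
        ContinuousOn v (Set.Icc 0 ((N : ℝ) * τ)) →
        (∀ k : ℕ, k ≤ N → v ((k : ℝ) * τ) = u ((k : ℝ) * τ)) →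
        Upwind α β τ N v →
        ((1 / C) * ∫ t in (0 : ℝ)..((N : ℝ) * τ), (u t) ^ 2)
            ≤ (∫ t in (0 : ℝ)..((N : ℝ) * τ), (v t) ^ 2) ∧
          (∫ t in (0 : ℝ)..((N : ℝ) * τ), (v t) ^ 2)
            ≤ C * ∫ t in (0 : ℝ)..((N : ℝ) * τ), (u t) ^ 2 := by
  refine ⟨16, by norm_num, fun α β τ hα hβ hτ N _ u v hu hPW hu0 huT hv hvu hUp => ?_⟩
  have hcell k (hk : k ∈ Finset.range N) :=
    integral_sq_cell_bounds hα hβ.le hτ.le hPW hUp hvu (Finset.mem_range.1 hk)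
  rw [integral_eq_sum_integral_grid (f := fun t => u t ^ 2) hτ.le (hu.pow 2),
    integral_eq_sum_integral_grid (f := fun t => v t ^ 2) hτ.le (hv.pow 2)]
  have hu₁ := Finset.sum_le_sum fun k hk => (hcell k hk).1
  have hu₂ := Finset.sum_le_sum fun k hk => (hcell k hk).2.1
  have hv₁ := Finset.sum_le_sum fun k hk => (hcell k hk).2.2.1
  have hv₂ := Finset.sum_le_sum fun k hk => (hcell k hk).2.2.2
  have hshift :
      ∑ k ∈ Finset.range N, u ((k + 1 : ℕ) * τ) ^ 2 = ∑ k ∈ Finset.range N, u (k * τ) ^ 2 :=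
    sum_range_succ_eq_sum_range_of_eq_zero (f := fun k : ℕ => u (k * τ) ^ 2) (by simp [hu0])
      (by simp [huT])
  simp only [← Finset.mul_sum, Finset.sum_add_distrib, hshift] at hu₁ hu₂ hv₁ hv₂
  have hS : 0 ≤ τ * ∑ k ∈ Finset.range N, u (k * τ) ^ 2 :=
    mul_nonneg hτ.le (Finset.sum_nonneg fun k _ => sq_nonneg _)
  constructor <;> linarith
end

section
/- There exists a constant C > 0, independent of α, β, τ and N, with the following property. Let α, β, τ > 0, let N ≥ 1 be an integer, set T = Nτ, let u ∈ H¹(0,T), and let v be the upwinded interpolant of u, i.e. v is continuous on [0,T], v(kτ) = u(kτ) for all 0 ≤ k ≤ N, and on each interval [kτ, (k+1)τ] there exist constants c₁, c₂ with v(t) = c₁ + c₂ exp(−βt/α). Then ∫₀ᵀ |u − v|² ≤ C τ² ∫₀ᵀ |u̇|². -/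
/-!
On a cell `[a, b]` of the grid the interpolant is `c₁ + c₂ exp(-βt/α)`, a monotone function of `t`,
so `v(t)` stays between `v(a) = u(a)` and `v(b) = u(b)`. Both `|u(t) - u(a)|` and
`|v(t) - v(a)| ≤ |u(b) - u(a)|` are then at most `∫ₐᵇ |u̇|`, so `|u - v| ≤ 2 ∫ₐᵇ |u̇|` on the cell,
and Cauchy–Schwarz turns this into `∫ₐᵇ |u - v|² ≤ 4 (b - a)² ∫ₐᵇ |u̇|²`. Summing over the cells
gives the theorem with `C = 4`.
-/

open MeasureTheory

open Set Real

theorem monotone_or_antitone_const_add_mul_exp (c₁ c₂ κ : ℝ) :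
    Monotone (fun t => c₁ + c₂ * exp (κ * t)) ∨ Antitone (fun t => c₁ + c₂ * exp (κ * t)) := by
  have hexp : Monotone (fun t => exp (κ * t)) ∨ Antitone (fun t => exp (κ * t)) :=
    (le_total 0 κ).imp (fun hκ => exp_monotone.comp (monotone_mul_left_of_nonneg hκ))
      (fun hκ => exp_monotone.comp_antitone (antitone_mul_left hκ))
  rcases le_total 0 c₂ with hc | hc <;> rcases hexp with h | h
  · exact .inl ((h.const_mul hc).const_add c₁)
  · exact .inr ((h.const_mul hc).const_add c₁)
  · exact .inr ((h.const_mul_of_nonpos hc).const_add c₁)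
  · exact .inl ((h.const_mul_of_nonpos hc).const_add c₁)

theorem Upwind.monotoneOn_or_antitoneOn {α β τ : ℝ} {N k : ℕ} {v : ℝ → ℝ}
    (hv : Upwind α β τ N v) (hk : k < N) :
    MonotoneOn v (Icc ((k : ℝ) * τ) (((k + 1 : ℕ) : ℝ) * τ)) ∨
      AntitoneOn v (Icc ((k : ℝ) * τ) (((k + 1 : ℕ) : ℝ) * τ)) := by
  obtain ⟨c₁, c₂, hform⟩ := hv k hk
  have heq : EqOn (fun t => c₁ + c₂ * exp (-β / α * t)) v
      (Icc ((k : ℝ) * τ) (((k + 1 : ℕ) : ℝ) * τ)) := fun t ht => by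
    rw [hform t (by simpa using ht)]; ring_nf
  exact (monotone_or_antitone_const_add_mul_exp c₁ c₂ _).imp
    (fun h => (h.monotoneOn _).congr heq) (fun h => (h.antitoneOn _).congr heq)

theorem sq_intervalIntegral_abs_le {f : ℝ → ℝ} {a b : ℝ} (hab : a ≤ b)
    (hf : IntervalIntegrable f volume a b)
    (hf2 : IntervalIntegrable (fun t => f t ^ 2) volume a b) :
    (∫ t in a..b, |f t|) ^ 2 ≤ (b - a) * ∫ t in a..b, f t ^ 2 := by
  rcases hab.eq_or_lt with rfl | hab
  · simp
  set I := ∫ t in a..b, |f t|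
  set J := ∫ t in a..b, f t ^ 2
  have h1 : IntervalIntegrable (fun t => (b - a) ^ 2 * f t ^ 2) volume a b := hf2.const_mul _
  have h2 : IntervalIntegrable (fun t => 2 * (b - a) * I * |f t|) volume a b :=
    hf.abs.const_mul _
  -- the variance of `|f|` about its mean `I / (b - a)`, scaled by `(b - a)²`
  have hvar : 0 ≤ ∫ t in a..b, ((b - a) * |f t| - I) ^ 2 :=
    intervalIntegral.integral_nonneg hab.le fun t _ => sq_nonneg _
  have hexpand : ∫ t in a..b, ((b - a) * |f t| - I) ^ 2
      = (b - a) * ((b - a) * J - I ^ 2) := by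
    have hpt : ∀ t, ((b - a) * |f t| - I) ^ 2
        = (b - a) ^ 2 * f t ^ 2 - 2 * (b - a) * I * |f t| + I ^ 2 := fun t => by
      rw [← sq_abs (f t)]; ring
    simp only [hpt]
    rw [intervalIntegral.integral_add (h1.sub h2) intervalIntegrable_const,
      intervalIntegral.integral_sub h1 h2, intervalIntegral.integral_const_mul,
      intervalIntegral.integral_const_mul, intervalIntegral.integral_const, smul_eq_mul]
    ring
  nlinarith [sub_pos.mpr hab]

theorem sub_eq_intervalIntegral_of_eq_add {u u' : ℝ → ℝ} {x₀ T a t : ℝ}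
    (hrep : ∀ s ∈ Icc x₀ T, u s = u x₀ + ∫ r in x₀..s, u' r)
    (hu' : IntervalIntegrable u' volume x₀ T) (ha : a ∈ Icc x₀ T) (ht : t ∈ Icc x₀ T) :
    u t - u a = ∫ s in a..t, u' s := by
  have hsub : ∀ s ∈ Icc x₀ T, IntervalIntegrable u' volume x₀ s := fun s hs =>
    hu'.mono_set (uIcc_subset_uIcc left_mem_uIcc (Icc_subset_uIcc hs))
  rw [hrep t ht, hrep a ha, ← intervalIntegral.integral_interval_sub_left (hsub t ht) (hsub a ha)]
  ring

theorem intervalIntegral_sq_sub_le_of_monotoneOn_or_antitoneOn {u u' v : ℝ → ℝ} {a b : ℝ}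
    (hab : a ≤ b) (hftc : ∀ t ∈ Icc a b, u t - u a = ∫ s in a..t, u' s)
    (hu' : IntervalIntegrable u' volume a b)
    (hu'2 : IntervalIntegrable (fun t => u' t ^ 2) volume a b)
    (huv : IntervalIntegrable (fun t => (u t - v t) ^ 2) volume a b)
    (hmono : MonotoneOn v (Icc a b) ∨ AntitoneOn v (Icc a b))
    (hva : v a = u a) (hvb : v b = u b) :
    ∫ t in a..b, (u t - v t) ^ 2 ≤ 4 * (b - a) ^ 2 * ∫ t in a..b, u' t ^ 2 := by
  set I := ∫ t in a..b, |u' t|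
  have hu_osc : ∀ t ∈ Icc a b, |u t - u a| ≤ I := fun t ht => by
    rw [hftc t ht]
    exact (intervalIntegral.abs_integral_le_integral_abs ht.1).trans
      (intervalIntegral.integral_mono_interval le_rfl ht.1 ht.2
        (.of_forall fun _ => abs_nonneg _) hu'.abs)
  have hv_between : MapsTo v (Icc a b) (uIcc (v a) (v b)) := by
    rw [← uIcc_of_le hab] at hmono ⊢
    exact hmono.elim MonotoneOn.mapsTo_uIcc AntitoneOn.mapsTo_uIcc
  have hpt : ∀ t ∈ Icc a b, (u t - v t) ^ 2 ≤ 4 * ((b - a) * ∫ t in a..b, u' t ^ 2) := by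
    intro t ht
    have hv_osc : |v t - u a| ≤ I := by
      rw [← hva]
      refine (abs_sub_left_of_mem_uIcc (hv_between ht)).trans ?_
      rw [hva, hvb]
      exact hu_osc b (right_mem_Icc.mpr hab)
    have hdiff : |u t - v t| ≤ 2 * I := by
      calc |u t - v t| = |(u t - u a) - (v t - u a)| := by ring_nf
        _ ≤ |u t - u a| + |v t - u a| := abs_sub _ _
        _ ≤ 2 * I := by linarith [hu_osc t ht]
    calc (u t - v t) ^ 2 = |u t - v t| ^ 2 := (sq_abs _).symm
      _ ≤ (2 * I) ^ 2 := pow_le_pow_left₀ (abs_nonneg _) hdiff 2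
      _ ≤ 4 * ((b - a) * ∫ t in a..b, u' t ^ 2) := by
        nlinarith [sq_intervalIntegral_abs_le hab hu' hu'2]
  calc ∫ t in a..b, (u t - v t) ^ 2
      ≤ ∫ _ in a..b, 4 * ((b - a) * ∫ t in a..b, u' t ^ 2) :=
        intervalIntegral.integral_mono_on hab huv intervalIntegrable_const hpt
    _ = 4 * (b - a) ^ 2 * ∫ t in a..b, u' t ^ 2 := by
        rw [intervalIntegral.integral_const, smul_eq_mul]; ring

theorem intervalIntegral_le_const_mul_of_adjacent_intervals {f g : ℝ → ℝ} {a : ℕ → ℝ} {N : ℕ}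
    {c : ℝ} (hf : ∀ k < N, IntervalIntegrable f volume (a k) (a (k + 1)))
    (hg : ∀ k < N, IntervalIntegrable g volume (a k) (a (k + 1)))
    (h : ∀ k < N, ∫ t in a k..a (k + 1), f t ≤ c * ∫ t in a k..a (k + 1), g t) :
    ∫ t in a 0..a N, f t ≤ c * ∫ t in a 0..a N, g t := by
  rw [← intervalIntegral.sum_integral_adjacent_intervals hf,
    ← intervalIntegral.sum_integral_adjacent_intervals hg, Finset.mul_sum]
  exact Finset.sum_le_sum fun k hk => h k (Finset.mem_range.mp hk)

/-- **Approximation error of the upwinded interpolant, uniformly in `α`, `β`, `τ`, `N`:**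
there is `C > 0` such that for all `α, β, τ > 0`, all integers `N ≥ 1` with `T = Nτ`,
every `u ∈ H¹(0,T)` (continuous with weak derivative `u'` on `[0,T]`, `u' ∈ L²(0,T)`),
and `v` its upwinded interpolant (continuous, agreeing with `u` at the grid points `kτ`,
upwinded on each interval), one has `∫₀ᵀ |u − v|² ≤ C τ² ∫₀ᵀ |u̇|²`. -/
theorem upwind_interpolant_error :
    ∃ C > (0 : ℝ), ∀ α β τ : ℝ, 0 < α → 0 < β → 0 < τ → ∀ N : ℕ, 1 ≤ N →
      ∀ u u' v : ℝ → ℝ,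
        ContinuousOn u (Set.Icc 0 ((N : ℝ) * τ)) →
        (∀ s ∈ Set.Icc (0 : ℝ) ((N : ℝ) * τ), u s = u 0 + ∫ t in (0 : ℝ)..s, u' t) →
        IntervalIntegrable u' volume 0 ((N : ℝ) * τ) →
        IntervalIntegrable (fun t => (u' t) ^ 2) volume 0 ((N : ℝ) * τ) →
        ContinuousOn v (Set.Icc 0 ((N : ℝ) * τ)) →
        (∀ k : ℕ, k ≤ N → v ((k : ℝ) * τ) = u ((k : ℝ) * τ)) →
        Upwind α β τ N v →
        (∫ t in (0 : ℝ)..((N : ℝ) * τ), (u t - v t) ^ 2)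
          ≤ C * τ ^ 2 * ∫ t in (0 : ℝ)..((N : ℝ) * τ), (u' t) ^ 2 := by
  refine ⟨4, by norm_num, fun α β τ _ _ hτ N _ u u' v hu hrep hu' hu'2 hv hgrid hup => ?_⟩
  have hnode : ∀ k ≤ N, (k : ℝ) * τ ∈ Icc 0 ((N : ℝ) * τ) := fun k hk =>
    ⟨by positivity, by gcongr⟩
  have hcell : ∀ k < N, Icc ((k : ℝ) * τ) (((k + 1 : ℕ) : ℝ) * τ) ⊆ Icc 0 ((N : ℝ) * τ) :=
    fun k hk => Icc_subset_Icc (hnode k hk.le).1 (hnode (k + 1) hk).2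
  have hcell_uIcc : ∀ k < N, uIcc ((k : ℝ) * τ) (((k + 1 : ℕ) : ℝ) * τ) ⊆ uIcc 0 ((N : ℝ) * τ) :=
    fun k hk => uIcc_subset_uIcc (Icc_subset_uIcc (hnode k hk.le))
      (Icc_subset_uIcc (hnode (k + 1) hk))
  have huv : ContinuousOn (fun t => (u t - v t) ^ 2) (uIcc 0 ((N : ℝ) * τ)) := by
    rw [uIcc_of_le (hnode N le_rfl).1]; exact (hu.sub hv).pow 2
  have key := intervalIntegral_le_const_mul_of_adjacent_intervals
    (a := fun k : ℕ => (k : ℝ) * τ) (c := 4 * τ ^ 2)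
    (fun k hk => (huv.mono (hcell_uIcc k hk)).intervalIntegrable)
    (fun k hk => hu'2.mono_set (hcell_uIcc k hk)) fun k hk => by
      have hlen : ((k + 1 : ℕ) : ℝ) * τ - k * τ = τ := by push_cast; ring
      simpa only [hlen] using intervalIntegral_sq_sub_le_of_monotoneOn_or_antitoneOn
        (by gcongr; omega)
        (fun t ht => sub_eq_intervalIntegral_of_eq_add hrep hu' (hnode k hk.le) (hcell k hk ht))
        (hu'.mono_set (hcell_uIcc k hk)) (hu'2.mono_set (hcell_uIcc k hk))
        (huv.mono (hcell_uIcc k hk)).intervalIntegrable (hup.monotoneOn_or_antitoneOn hk)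
        (hgrid k hk.le) (hgrid (k + 1) hk)
  simpa using key
end

section
/- Let α, β, τ > 0, let N ≥ 1 be an integer, and set T = Nτ. Let u : [0,T] → ℝ be continuous and affine on each interval [kτ, (k+1)τ], and let v be its upwinded interpolant. Then ∫₀ᵀ |v̇|² = Φ(p) ∫₀ᵀ |u̇|², where p = βτ/α is the Péclet number and Φ(p) = ((exp(p) + 1)/(exp(p) − 1)) · (p/2). -/
open MeasureTheory

/-- `Φ(p) = ((e^p + 1)/(e^p − 1)) · (p/2)`. -/
noncomputable def Phi (p : ℝ) : ℝ :=
  ((Real.exp p + 1) / (Real.exp p - 1)) * (p / 2)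

/-! On a cell `[a, b]` write `κ = β/α`, `u = a₁ + a₂ t` and `v = c₁ + c₂ e^{-κt}`.
Interpolation at both endpoints gives `a₂ (b - a) = c₂ (e^{-κb} - e^{-κa})`, and
`∫ₐᵇ v̇² = c₂² κ/2 (e^{-2κa} - e^{-2κb})` is explicit; eliminating `a₂` shows that the ratio
`∫ₐᵇ v̇² / ∫ₐᵇ u̇²` is `Φ(κ(b - a))` whatever the data of the cell. As all cells have length `τ`,
the ratio `Φ(βτ/α)` survives summation. -/

open Real Set intervalIntegral

theorem eqOn_Ioo_of_hasDerivAt_of_eqOn_Icc {f g f' g' : ℝ → ℝ} {a b : ℝ}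
    (hfg : EqOn f g (Icc a b)) (hf : ∀ t ∈ Ioo a b, HasDerivAt f (f' t) t)
    (hg : ∀ t ∈ Ioo a b, HasDerivAt g (g' t) t) : EqOn f' g' (Ioo a b) := fun t ht =>
  (hf t ht).unique <| (hg t ht).congr_of_eventuallyEq <|
    Filter.eventually_of_mem (Ioo_mem_nhds ht.1 ht.2) fun _ hx => hfg (Ioo_subset_Icc_self hx)

theorem integral_sq_deriv_exp_neg_mul (κ c a b : ℝ) :
    ∫ t in a..b, (c * (-κ * exp (-κ * t))) ^ 2
      = c ^ 2 * κ / 2 * (exp (-κ * a) ^ 2 - exp (-κ * b) ^ 2) := by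
  have hF : ∀ t ∈ uIcc a b, HasDerivAt (fun t => -(c ^ 2 * κ / 2) * exp (-κ * t) ^ 2)
      ((c * (-κ * exp (-κ * t))) ^ 2) t := by
    intro t _
    have hexp : HasDerivAt (fun t => exp (-κ * t)) (-κ * exp (-κ * t)) t := by
      simpa [mul_comm] using ((hasDerivAt_id t).const_mul (-κ)).exp
    refine ((hexp.fun_pow 2).const_mul (-(c ^ 2 * κ / 2))).congr_deriv ?_
    push_cast
    ring
  rw [integral_eq_sub_of_hasDerivAt hF ((by fun_prop : Continuous _).intervalIntegrable a b)]
  ring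

theorem integral_sq_deriv_exp_neg_mul_eq_Phi_mul {κ a b c₁ c₂ a₁ a₂ : ℝ} (hκ : κ ≠ 0)
    (hab : a ≠ b) (ha : c₁ + c₂ * exp (-κ * a) = a₁ + a₂ * a)
    (hb : c₁ + c₂ * exp (-κ * b) = a₁ + a₂ * b) :
    ∫ t in a..b, (c₂ * (-κ * exp (-κ * t))) ^ 2 = Phi (κ * (b - a)) * ∫ _ in a..b, a₂ ^ 2 := by
  have hh : b - a ≠ 0 := sub_ne_zero.mpr hab.symm
  have hP : exp (κ * (b - a)) - 1 ≠ 0 :=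
    sub_ne_zero.mpr fun h => mul_ne_zero hκ hh (exp_eq_one_iff _ |>.mp h)
  have hEb : exp (-κ * b) = exp (-κ * a) / exp (κ * (b - a)) := by
    rw [eq_div_iff (exp_pos _).ne', ← exp_add]
    congr 1
    ring
  have ha₂ : a₂ = c₂ * (exp (-κ * b) - exp (-κ * a)) / (b - a) := by
    rw [eq_div_iff hh]
    linear_combination ha - hb
  rw [integral_sq_deriv_exp_neg_mul, intervalIntegral.integral_const, smul_eq_mul, ha₂, hEb,
    Phi]
  have hP₀ : exp (κ * (b - a)) ≠ 0 := (exp_pos _).ne'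
  generalize exp (-κ * a) = E, exp (κ * (b - a)) = P at *
  field_simp
  ring

theorem integral_sq_deriv_upwind_eq_Phi_mul {κ a b : ℝ} {u u' v v' : ℝ → ℝ} (hκ : κ ≠ 0)
    (hab : a < b) (hu : ∃ a₁ a₂ : ℝ, ∀ t ∈ Icc a b, u t = a₁ + a₂ * t)
    (hv : ∃ c₁ c₂ : ℝ, ∀ t ∈ Icc a b, v t = c₁ + c₂ * exp (-κ * t))
    (hva : v a = u a) (hvb : v b = u b)
    (hu' : ∀ t ∈ Ioo a b, HasDerivAt u (u' t) t) (hv' : ∀ t ∈ Ioo a b, HasDerivAt v (v' t) t) :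
    IntervalIntegrable (fun t => v' t ^ 2) volume a b ∧
      IntervalIntegrable (fun t => u' t ^ 2) volume a b ∧
      ∫ t in a..b, v' t ^ 2 = Phi (κ * (b - a)) * ∫ t in a..b, u' t ^ 2 := by
  obtain ⟨a₁, a₂, hu⟩ := hu
  obtain ⟨c₁, c₂, hv⟩ := hv
  have hu'_eq : EqOn u' (fun _ => a₂) (Ioo a b) :=
    eqOn_Ioo_of_hasDerivAt_of_eqOn_Icc hu hu' fun t _ => by
      simpa using ((hasDerivAt_id t).const_mul a₂).const_add a₁
  have hv'_eq : EqOn v' (fun t => c₂ * (-κ * exp (-κ * t))) (Ioo a b) :=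
    eqOn_Ioo_of_hasDerivAt_of_eqOn_Icc hv hv' fun t _ => by
      simpa [mul_comm] using (((hasDerivAt_id t).const_mul (-κ)).exp.const_mul c₂).const_add c₁
  have hu'_sq : EqOn (fun t => u' t ^ 2) (fun _ => a₂ ^ 2) (uIoo a b) := by
    rw [uIoo_of_le hab.le]
    exact fun t ht => congrArg (· ^ 2) (hu'_eq ht)
  have hv'_sq : EqOn (fun t => v' t ^ 2) (fun t => (c₂ * (-κ * exp (-κ * t))) ^ 2) (uIoo a b) := by
    rw [uIoo_of_le hab.le]
    exact fun t ht => congrArg (· ^ 2) (hv'_eq ht)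
  refine ⟨(Continuous.intervalIntegrable (by fun_prop) a b).congr_uIoo hv'_sq.symm,
    intervalIntegrable_const.congr_uIoo hu'_sq.symm, ?_⟩
  rw [integral_congr_uIoo hv'_sq, integral_congr_uIoo hu'_sq]
  have ha : c₁ + c₂ * exp (-κ * a) = a₁ + a₂ * a := by
    rw [← hv a (left_mem_Icc.mpr hab.le), ← hu a (left_mem_Icc.mpr hab.le), hva]
  have hb : c₁ + c₂ * exp (-κ * b) = a₁ + a₂ * b := by
    rw [← hv b (right_mem_Icc.mpr hab.le), ← hu b (right_mem_Icc.mpr hab.le), hvb]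
  exact integral_sq_deriv_exp_neg_mul_eq_Phi_mul hκ hab.ne ha hb

theorem integral_eq_mul_of_forall_integral_adjacent_eq {μ : Measure ℝ} {f g : ℝ → ℝ}
    {a : ℕ → ℝ} {n : ℕ} (c : ℝ) (hf : ∀ k < n, IntervalIntegrable f μ (a k) (a (k + 1)))
    (hg : ∀ k < n, IntervalIntegrable g μ (a k) (a (k + 1)))
    (h : ∀ k < n, ∫ x in a k..a (k + 1), f x ∂μ = c * ∫ x in a k..a (k + 1), g x ∂μ) :
    ∫ x in a 0..a n, f x ∂μ = c * ∫ x in a 0..a n, g x ∂μ := by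
  rw [← sum_integral_adjacent_intervals hf, ← sum_integral_adjacent_intervals hg,
    Finset.mul_sum]
  exact Finset.sum_congr rfl fun k hk => h k (Finset.mem_range.mp hk)

/-- **Exact energy ratio between a piecewise affine function and its upwinded
interpolant:** for `α, β, τ > 0`, `N ≥ 1`, `T = Nτ`, a continuous `τ`-piecewise affine
`u` and its upwinded interpolant `v` (with piecewise derivatives `u'`, `v'`),
`∫₀ᵀ |v̇|² = Φ(p) ∫₀ᵀ |u̇|²` where `p = βτ/α` is the Péclet number. -/
theorem upwind_interpolant_energy_ratio :
    ∀ α β τ : ℝ, 0 < α → 0 < β → 0 < τ → ∀ N : ℕ, 1 ≤ N →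
      ∀ u u' v v' : ℝ → ℝ,
        PWAffine τ N u →
        ContinuousOn v (Set.Icc 0 ((N : ℝ) * τ)) →
        (∀ k : ℕ, k ≤ N → v ((k : ℝ) * τ) = u ((k : ℝ) * τ)) →
        Upwind α β τ N v →
        (∀ k : ℕ, k < N → ∀ t ∈ Set.Ioo ((k : ℝ) * τ) (((k : ℝ) + 1) * τ),
          HasDerivAt u (u' t) t) →
        (∀ k : ℕ, k < N → ∀ t ∈ Set.Ioo ((k : ℝ) * τ) (((k : ℝ) + 1) * τ),
          HasDerivAt v (v' t) t) →
        (∫ t in (0 : ℝ)..((N : ℝ) * τ), (v' t) ^ 2)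
          = Phi (β * τ / α) * ∫ t in (0 : ℝ)..((N : ℝ) * τ), (u' t) ^ 2 := by
  intro α β τ hα hβ hτ N _ u u' v v' hu _ hvu hv hu' hv'
  have hcell : ∀ k < N,
      IntervalIntegrable (fun t => v' t ^ 2) volume (k * τ) ((k + 1 : ℕ) * τ) ∧
      IntervalIntegrable (fun t => u' t ^ 2) volume (k * τ) ((k + 1 : ℕ) * τ) ∧
      ∫ t in k * τ..(k + 1 : ℕ) * τ, v' t ^ 2
        = Phi (β * τ / α) * ∫ t in k * τ..(k + 1 : ℕ) * τ, u' t ^ 2 := by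
    intro k hk
    have hv_exp : ∃ c₁ c₂ : ℝ, ∀ t ∈ Icc ((k : ℝ) * τ) ((k + 1 : ℕ) * τ),
        v t = c₁ + c₂ * exp (-(β / α) * t) := by
      obtain ⟨c₁, c₂, h⟩ := hv k hk
      refine ⟨c₁, c₂, fun t ht => ?_⟩
      rw [h t (by exact_mod_cast ht), neg_div, neg_mul, mul_div_right_comm]
    have hcell := integral_sq_deriv_upwind_eq_Phi_mul (div_pos hβ hα).ne'
      (by push_cast; nlinarith) (by exact_mod_cast hu k hk) hv_exp (hvu k hk.le) (hvu (k + 1) hk)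
      (by exact_mod_cast hu' k hk) (by exact_mod_cast hv' k hk)
    rwa [show β / α * (((k + 1 : ℕ) : ℝ) * τ - k * τ) = β * τ / α by push_cast; ring] at hcell
  simpa using integral_eq_mul_of_forall_integral_adjacent_eq (a := fun k : ℕ => (k : ℝ) * τ) _
    (fun k hk => (hcell k hk).1) (fun k hk => (hcell k hk).2.1) (fun k hk => (hcell k hk).2.2)
end

section
/- There exists a constant C > 0 such that for every α ∈ (0, 1/2] and every u ∈ H¹(ℝ), the Slobodetski H^{1/2} seminorm satisfies |u|²_{H^{1/2}} ≤ C ( ‖u‖²_{L²} + |log α| · |u|²_{H^{1/2}_w} + α ∫ |u̇|² ). -/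
open MeasureTheory

/-!
Substituting `y = x - h`, the seminorm is `∫ E(h) / h² dh` with `E(h) = ‖u - u(· - h)‖²_{L²}`, an
even function of `h`. On `0 < h ≤ α` the fundamental theorem of calculus and Cauchy–Schwarz give
`E(h) ≤ h² ‖u̇‖²`, contributing `α ‖u̇‖²`; on `α < h ≤ 1` the weak bound `E(h) ≤ M² h` contributes
`M² log (1/α)`; on `h > 1` the trivial bound `E(h) ≤ 4 ‖u‖²` contributes `4 ‖u‖²`. Doubling for
`h < 0` yields the inequality with `C = 8`.
-/

open Set
open scoped ENNReal

theorem lintegral_comp_abs (f : ℝ → ℝ≥0∞) :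
    ∫⁻ x, f |x| = 2 * ∫⁻ x in Ioi 0, f x := by
  have h_pos : ∫⁻ x in Ioi 0, f |x| = ∫⁻ x in Ioi 0, f x :=
    setLIntegral_congr_fun measurableSet_Ioi fun x hx => by rw [abs_of_pos hx]
  have h_neg : ∫⁻ x in Iic 0, f |x| = ∫⁻ x in Ioi 0, f x := by
    calc ∫⁻ x in Iic 0, f |x| = ∫⁻ x in Neg.neg ⁻¹' Ici 0, f (-x) := by
          rw [neg_preimage, neg_Ici, neg_zero]
          exact setLIntegral_congr_fun measurableSet_Iic fun x hx => by rw [abs_of_nonpos hx]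
      _ = ∫⁻ x in Ici 0, f x :=
          (Measure.measurePreserving_neg volume).setLIntegral_comp_preimage_emb
            (Homeomorph.neg ℝ).measurableEmbedding f _
      _ = ∫⁻ x in Ioi 0, f x := by rw [restrict_Ioi_eq_restrict_Ici]
  rw [← lintegral_add_compl _ measurableSet_Ioi, compl_Ioi, h_pos, h_neg, two_mul]

theorem sq_lintegral_le_measure_univ_mul {α : Type*} [MeasurableSpace α] (μ : Measure α)
    {f : α → ℝ≥0∞} (hf : AEMeasurable f μ) :
    (∫⁻ x, f x ∂μ) ^ 2 ≤ μ univ * ∫⁻ x, f x ^ 2 ∂μ := by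
  have holder := ENNReal.lintegral_mul_le_Lp_mul_Lq μ Real.HolderConjugate.two_two hf
    aemeasurable_const (g := fun _ => 1)
  simp only [Pi.mul_apply, mul_one, ENNReal.rpow_two, one_pow, lintegral_const, one_mul] at holder
  calc (∫⁻ x, f x ∂μ) ^ 2
      ≤ ((∫⁻ x, f x ^ 2 ∂μ) ^ (1 / 2 : ℝ) * μ univ ^ (1 / 2 : ℝ)) ^ 2 := by gcongr
    _ = μ univ * ∫⁻ x, f x ^ 2 ∂μ := by
      rw [mul_pow, ← ENNReal.rpow_two, ← ENNReal.rpow_two, ← ENNReal.rpow_mul,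
        ← ENNReal.rpow_mul, mul_comm]
      norm_num

noncomputable def shiftEnergy (u : ℝ → ℝ) (h : ℝ) : ℝ≥0∞ :=
  ∫⁻ x, ENNReal.ofReal ((u x - u (x - h)) ^ 2)

theorem shiftEnergy_neg (u : ℝ → ℝ) (h : ℝ) : shiftEnergy u (-h) = shiftEnergy u h := by
  rw [shiftEnergy, ← lintegral_sub_right_eq_self _ h, shiftEnergy]
  congr! 3 with x
  rw [sub_neg_eq_add, sub_add_cancel, ← neg_sub, neg_sq]

theorem shiftEnergy_abs (u : ℝ → ℝ) (h : ℝ) : shiftEnergy u |h| = shiftEnergy u h := by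
  rcases abs_choice h with h_abs | h_abs <;> rw [h_abs]
  exact shiftEnergy_neg u h

theorem shiftEnergy_le_four_mul {u : ℝ → ℝ} (hu : Measurable u) (h : ℝ) :
    shiftEnergy u h ≤ 4 * ∫⁻ x, ENNReal.ofReal (u x ^ 2) := by
  have h_pt (x : ℝ) : ENNReal.ofReal ((u x - u (x - h)) ^ 2)
      ≤ 2 * (ENNReal.ofReal (u x ^ 2) + ENNReal.ofReal (u (x - h) ^ 2)) := by
    rw [← ENNReal.ofReal_add (by positivity) (by positivity), ← ENNReal.ofReal_ofNat 2,
      ← ENNReal.ofReal_mul zero_le_two]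
    exact ENNReal.ofReal_le_ofReal (by nlinarith [sq_nonneg (u x + u (x - h))])
  calc shiftEnergy u h
      ≤ ∫⁻ x, 2 * (ENNReal.ofReal (u x ^ 2) + ENNReal.ofReal (u (x - h) ^ 2)) :=
        lintegral_mono h_pt
    _ = 4 * ∫⁻ x, ENNReal.ofReal (u x ^ 2) := by
        rw [lintegral_const_mul' _ _ ENNReal.ofNat_ne_top,
          lintegral_add_left (hu.pow_const 2).ennreal_ofReal,
          lintegral_sub_right_eq_self (fun x => ENNReal.ofReal (u x ^ 2)) h]
        ring

theorem enorm_sq_eq_ofReal_sq (r : ℝ) : ‖r‖ₑ ^ 2 = ENNReal.ofReal (r ^ 2) := by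
  rw [Real.enorm_eq_ofReal_abs, ← ENNReal.ofReal_pow (abs_nonneg r), sq_abs]

theorem lintegral_lintegral_Ioc_comp_sub {g : ℝ → ℝ≥0∞} (hg : Measurable g) (h : ℝ) :
    ∫⁻ x, ∫⁻ s in Ioc 0 h, g (x - s) = ENNReal.ofReal h * ∫⁻ x, g x := by
  rw [lintegral_lintegral_swap (by fun_prop)]
  simp_rw [lintegral_sub_right_eq_self g]
  rw [setLIntegral_const, Real.volume_Ioc, sub_zero, mul_comm]

theorem ofReal_sq_sub_le_mul_setLIntegral_deriv_sq {u v : ℝ → ℝ} (hv : Measurable v)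
    (hftc : ∀ a b, u b - u a = ∫ t in a..b, v t) {h : ℝ} (hh : 0 ≤ h) (x : ℝ) :
    ENNReal.ofReal ((u x - u (x - h)) ^ 2)
      ≤ ENNReal.ofReal h * ∫⁻ s in Ioc 0 h, ENNReal.ofReal (v (x - s) ^ 2) := by
  have h_ftc : u x - u (x - h) = ∫ s in Ioc 0 h, v (x - s) := by
    rw [hftc, ← intervalIntegral.integral_of_le hh, intervalIntegral.integral_comp_sub_left,
      sub_zero]
  calc ENNReal.ofReal ((u x - u (x - h)) ^ 2)
      = ‖∫ s in Ioc 0 h, v (x - s)‖ₑ ^ 2 := by rw [← h_ftc, enorm_sq_eq_ofReal_sq]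
    _ ≤ (∫⁻ s in Ioc 0 h, ‖v (x - s)‖ₑ) ^ 2 := by gcongr; exact enorm_integral_le_lintegral_enorm _
    _ ≤ volume.restrict (Ioc 0 h) univ * ∫⁻ s in Ioc 0 h, ‖v (x - s)‖ₑ ^ 2 :=
        sq_lintegral_le_measure_univ_mul _ (by fun_prop)
    _ = ENNReal.ofReal h * ∫⁻ s in Ioc 0 h, ENNReal.ofReal (v (x - s) ^ 2) := by
        simp_rw [Measure.restrict_apply_univ, Real.volume_Ioc, sub_zero, enorm_sq_eq_ofReal_sq]

theorem shiftEnergy_le_sq_mul_of_measurable {u v : ℝ → ℝ} (hv : Measurable v)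
    (hftc : ∀ a b, u b - u a = ∫ t in a..b, v t) {h : ℝ} (hh : 0 ≤ h) :
    shiftEnergy u h ≤ ENNReal.ofReal (h ^ 2) * ∫⁻ x, ENNReal.ofReal (v x ^ 2) :=
  calc shiftEnergy u h
      ≤ ∫⁻ x, ENNReal.ofReal h * ∫⁻ s in Ioc 0 h, ENNReal.ofReal (v (x - s) ^ 2) :=
        lintegral_mono (ofReal_sq_sub_le_mul_setLIntegral_deriv_sq hv hftc hh)
    _ = ENNReal.ofReal (h ^ 2) * ∫⁻ x, ENNReal.ofReal (v x ^ 2) := by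
        rw [lintegral_const_mul' _ _ ENNReal.ofReal_ne_top,
          lintegral_lintegral_Ioc_comp_sub (hv.pow_const 2).ennreal_ofReal, ← mul_assoc,
          ← ENNReal.ofReal_mul hh, sq]

theorem shiftEnergy_le_sq_mul {u v : ℝ → ℝ} (hv : AEMeasurable v)
    (hftc : ∀ a b, u b - u a = ∫ t in a..b, v t) {h : ℝ} (hh : 0 ≤ h) :
    shiftEnergy u h ≤ ENNReal.ofReal (h ^ 2) * ∫⁻ x, ENNReal.ofReal (v x ^ 2) := by
  have hftc' (a b : ℝ) : u b - u a = ∫ t in a..b, hv.mk v t := by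
    rw [hftc, intervalIntegral.integral_congr_ae (hv.ae_eq_mk.mono fun t ht _ => ht)]
  rw [lintegral_congr_ae (hv.ae_eq_mk.mono fun x hx => by rw [hx])]
  exact shiftEnergy_le_sq_mul_of_measurable hv.measurable_mk hftc' hh

theorem slobHalfSq_eq_lintegral_shiftEnergy {u : ℝ → ℝ} (hu : Measurable u) :
    slobHalfSq u = ∫⁻ h, shiftEnergy u h / ENNReal.ofReal (h ^ 2) := by
  have h_sub (x : ℝ) : ∫⁻ y, ENNReal.ofReal ((u x - u y) ^ 2 / |x - y| ^ 2)
      = ∫⁻ h, ENNReal.ofReal ((u x - u (x - h)) ^ 2 / h ^ 2) := by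
    rw [← lintegral_sub_left_eq_self _ x]
    simp_rw [sub_sub_cancel, sq_abs]
  simp_rw [slobHalfSq, h_sub]
  rw [lintegral_lintegral_swap (by fun_prop)]
  congr 1 with h
  rcases eq_or_ne h 0 with rfl | hh
  · simp [shiftEnergy]
  · rw [shiftEnergy, div_eq_mul_inv, ← lintegral_mul_const' _ _ (by simpa using hh)]
    simp_rw [ENNReal.ofReal_div_of_pos (sq_pos_of_ne_zero hh), div_eq_mul_inv]

theorem slobHalfSq_eq_two_mul_setLIntegral_Ioi {u : ℝ → ℝ} (hu : Measurable u) :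
    slobHalfSq u = 2 * ∫⁻ h in Ioi 0, shiftEnergy u h / ENNReal.ofReal (h ^ 2) := by
  rw [slobHalfSq_eq_lintegral_shiftEnergy hu,
    ← lintegral_comp_abs fun h => shiftEnergy u h / ENNReal.ofReal (h ^ 2)]
  simp_rw [shiftEnergy_abs, sq_abs]

theorem lintegral_Ioc_inv {a b : ℝ} (ha : 0 < a) (hab : a ≤ b) :
    ∫⁻ x in Ioc a b, (ENNReal.ofReal x)⁻¹ = ENNReal.ofReal (Real.log (b / a)) := by
  have h_zero : (0 : ℝ) ∉ uIcc a b := by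
    rw [uIcc_of_le hab]
    exact fun h => ha.not_ge h.1
  have h_int : IntegrableOn (fun x : ℝ => x⁻¹) (Ioc a b) :=
    (intervalIntegral.intervalIntegrable_inv (fun x hx h0 => h_zero (h0 ▸ hx))
      continuousOn_id).1
  rw [setLIntegral_congr_fun measurableSet_Ioc fun x hx =>
      (ENNReal.ofReal_inv_of_pos (ha.trans hx.1)).symm,
    ← ofReal_integral_eq_lintegral_ofReal h_int
      (ae_restrict_of_forall_mem measurableSet_Ioc fun x hx => (inv_pos.2 (ha.trans hx.1)).le),
    ← intervalIntegral.integral_of_le hab, integral_inv h_zero]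

theorem lintegral_Ioi_inv_sq {a : ℝ} (ha : 0 < a) :
    ∫⁻ x in Ioi a, (ENNReal.ofReal (x ^ 2))⁻¹ = (ENNReal.ofReal a)⁻¹ := by
  have h_rpow (x : ℝ) (hx : 0 < x) :
      (ENNReal.ofReal (x ^ 2))⁻¹ = ENNReal.ofReal (x ^ (-2 : ℝ)) := by
    rw [← ENNReal.ofReal_inv_of_pos (by positivity), Real.rpow_neg hx.le, Real.rpow_two]
  rw [setLIntegral_congr_fun measurableSet_Ioi fun x hx => h_rpow x (ha.trans hx),
    ← ofReal_integral_eq_lintegral_ofReal (integrableOn_Ioi_rpow_of_lt (by norm_num) ha)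
      (ae_restrict_of_forall_mem measurableSet_Ioi fun x hx => Real.rpow_nonneg (ha.trans hx).le _),
    integral_Ioi_rpow_of_lt (by norm_num) ha, ← ENNReal.ofReal_inv_of_pos ha]
  norm_num [Real.rpow_neg_one]

section RegionBounds

variable {E : ℝ → ℝ≥0∞}

theorem setLIntegral_Ioc_zero_div_sq_le {A : ℝ≥0∞} (α : ℝ)
    (hE : ∀ h, 0 < h → E h ≤ ENNReal.ofReal (h ^ 2) * A) :
    ∫⁻ h in Ioc 0 α, E h / ENNReal.ofReal (h ^ 2) ≤ ENNReal.ofReal α * A :=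
  calc ∫⁻ h in Ioc 0 α, E h / ENNReal.ofReal (h ^ 2)
      ≤ ∫⁻ _ in Ioc 0 α, A :=
        setLIntegral_mono' measurableSet_Ioc fun h hh => ENNReal.div_le_of_le_mul' (hE h hh.1)
    _ = ENNReal.ofReal α * A := by rw [setLIntegral_const, Real.volume_Ioc, sub_zero, mul_comm]

theorem setLIntegral_Ioc_div_sq_le {B : ℝ≥0∞} {a b : ℝ} (ha : 0 < a) (hab : a ≤ b)
    (hE : ∀ h, 0 < h → E h ≤ ENNReal.ofReal h * B) :
    ∫⁻ h in Ioc a b, E h / ENNReal.ofReal (h ^ 2) ≤ ENNReal.ofReal (Real.log (b / a)) * B := by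
  have h_pt (h : ℝ) (hh : 0 < h) : E h / ENNReal.ofReal (h ^ 2) ≤ (ENNReal.ofReal h)⁻¹ * B := by
    calc E h / ENNReal.ofReal (h ^ 2)
        ≤ ENNReal.ofReal h * B / (ENNReal.ofReal h * ENNReal.ofReal h) := by
          rw [← ENNReal.ofReal_mul hh.le, ← sq]
          gcongr
          exact hE h hh
      _ = (ENNReal.ofReal h)⁻¹ * B := by
          rw [ENNReal.mul_div_mul_left _ _ (by simpa using hh) ENNReal.ofReal_ne_top,
            div_eq_mul_inv, mul_comm]
  calc ∫⁻ h in Ioc a b, E h / ENNReal.ofReal (h ^ 2)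
      ≤ ∫⁻ h in Ioc a b, (ENNReal.ofReal h)⁻¹ * B :=
        setLIntegral_mono' measurableSet_Ioc fun h hh => h_pt h (ha.trans hh.1)
    _ = ENNReal.ofReal (Real.log (b / a)) * B := by
        rw [lintegral_mul_const _ (by fun_prop), lintegral_Ioc_inv ha hab]

theorem setLIntegral_Ioi_div_sq_le {K : ℝ≥0∞} {a : ℝ} (ha : 0 < a) (hE : ∀ h, E h ≤ K) :
    ∫⁻ h in Ioi a, E h / ENNReal.ofReal (h ^ 2) ≤ (ENNReal.ofReal a)⁻¹ * K :=
  calc ∫⁻ h in Ioi a, E h / ENNReal.ofReal (h ^ 2)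
      ≤ ∫⁻ h in Ioi a, (ENNReal.ofReal (h ^ 2))⁻¹ * K :=
        setLIntegral_mono' measurableSet_Ioi fun h _ => by
          rw [div_eq_mul_inv, mul_comm]
          gcongr
          exact hE h
    _ = (ENNReal.ofReal a)⁻¹ * K := by
        rw [lintegral_mul_const _ (by fun_prop), lintegral_Ioi_inv_sq ha]

theorem setLIntegral_Ioi_zero_div_sq_le {A B K : ℝ≥0∞} {α : ℝ} (hα : 0 < α) (hα1 : α ≤ 1)
    (h_small : ∀ h, 0 < h → E h ≤ ENNReal.ofReal (h ^ 2) * A)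
    (h_mid : ∀ h, 0 < h → E h ≤ ENNReal.ofReal h * B) (h_large : ∀ h, E h ≤ K) :
    ∫⁻ h in Ioi 0, E h / ENNReal.ofReal (h ^ 2)
      ≤ ENNReal.ofReal α * A + (ENNReal.ofReal (Real.log (1 / α)) * B + K) := by
  have h_tail := setLIntegral_Ioi_div_sq_le one_pos h_large
  rw [ENNReal.ofReal_one, inv_one, one_mul] at h_tail
  rw [← Ioc_union_Ioi_eq_Ioi hα.le, ← Ioc_union_Ioi_eq_Ioi hα1]
  refine (lintegral_union_le _ _ _).trans (add_le_add ?_ ((lintegral_union_le _ _ _).trans ?_))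
  · exact setLIntegral_Ioc_zero_div_sq_le α h_small
  · exact add_le_add (setLIntegral_Ioc_div_sq_le hα hα1 h_mid) h_tail

end RegionBounds

theorem lintegral_ofReal_sq_eq {f : ℝ → ℝ} (hf : MemLp f 2 volume) :
    ∫⁻ x, ENNReal.ofReal (f x ^ 2) = ENNReal.ofReal (∫ x, f x ^ 2) :=
  (ofReal_integral_eq_lintegral_ofReal ((memLp_two_iff_integrable_sq hf.1).1 hf)
    (ae_of_all _ fun x => sq_nonneg (f x))).symm

/-- **Logarithmic interpolation bound for the `H^{1/2}` seminorm:** there is `C > 0`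
such that for every `α ∈ (0,1/2]` and every `u ∈ H¹(ℝ)` (continuous with weak derivative
`u'`, both in `L²`) whose weak `H^{1/2}` seminorm is bounded by `M`
(`‖u − u(· − y)‖²_{L²} ≤ M² |y|` for all `y`), one has
`|u|²_{H^{1/2}} ≤ C ( ‖u‖²_{L²} + |log α| M² + α ∫ |u̇|² )`. -/
theorem slobHalf_le_weakHalf_log :
    ∃ C > (0 : ℝ), ∀ α : ℝ, 0 < α → α ≤ 1 / 2 →
      ∀ u u' : ℝ → ℝ, Continuous u →
        (∀ a b : ℝ, u b - u a = ∫ t in a..b, u' t) →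
        MemLp u 2 volume → MemLp u' 2 volume →
        ∀ M : ℝ, 0 ≤ M →
          (∀ y : ℝ, (∫⁻ x : ℝ, ENNReal.ofReal ((u x - u (x - y)) ^ 2))
              ≤ ENNReal.ofReal (M ^ 2 * |y|)) →
          slobHalfSq u ≤
            ENNReal.ofReal (C * ((∫ t : ℝ, (u t) ^ 2) + |Real.log α| * M ^ 2 +
              α * ∫ t : ℝ, (u' t) ^ 2)) := by
  refine ⟨8, by norm_num, fun α hα hα2 u u' hu hftc hu2 hu'2 M _ hweak => ?_⟩
  have hα1 : α ≤ 1 := by linarith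
  have h_log : Real.log (1 / α) = |Real.log α| := by
    rw [one_div, Real.log_inv, abs_of_nonpos (Real.log_nonpos hα.le hα1)]
  have h_weak (h : ℝ) (hh : 0 < h) :
      shiftEnergy u h ≤ ENNReal.ofReal h * ENNReal.ofReal (M ^ 2) :=
    (hweak h).trans_eq (by rw [abs_of_pos hh, mul_comm, ENNReal.ofReal_mul hh.le])
  have h_split := setLIntegral_Ioi_zero_div_sq_le hα hα1
    (fun h hh => shiftEnergy_le_sq_mul hu'2.1.aemeasurable hftc hh.le) h_weak
    (shiftEnergy_le_four_mul hu.measurable)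
  rw [lintegral_ofReal_sq_eq hu'2, lintegral_ofReal_sq_eq hu2, h_log] at h_split
  have hIu : 0 ≤ ∫ t, u t ^ 2 := integral_nonneg fun t => sq_nonneg _
  have hIu' : 0 ≤ ∫ t, u' t ^ 2 := integral_nonneg fun t => sq_nonneg _
  calc slobHalfSq u = 2 * ∫⁻ h in Ioi 0, shiftEnergy u h / ENNReal.ofReal (h ^ 2) :=
        slobHalfSq_eq_two_mul_setLIntegral_Ioi hu.measurable
    _ ≤ 2 * (ENNReal.ofReal α * ENNReal.ofReal (∫ t, u' t ^ 2) +
          (ENNReal.ofReal |Real.log α| * ENNReal.ofReal (M ^ 2) +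
            4 * ENNReal.ofReal (∫ t, u t ^ 2))) := by gcongr
    _ = ENNReal.ofReal (2 * (α * (∫ t, u' t ^ 2) + (|Real.log α| * M ^ 2 + 4 * ∫ t, u t ^ 2))) := by
        rw [← ENNReal.ofReal_ofNat 2, ← ENNReal.ofReal_ofNat 4, ← ENNReal.ofReal_mul hα.le,
          ← ENNReal.ofReal_mul (abs_nonneg _), ← ENNReal.ofReal_mul zero_le_four,
          ← ENNReal.ofReal_add (by positivity) (by positivity),
          ← ENNReal.ofReal_add (by positivity) (by positivity), ← ENNReal.ofReal_mul zero_le_two]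
    _ ≤ _ := ENNReal.ofReal_le_ofReal (by nlinarith [abs_nonneg (Real.log α), sq_nonneg M])
end

section
/- For every β₀ > 0 there exists a constant C > 0, independent of α and τ, with the following property. Let α, τ > 0 and 0 < β ≤ β₀, let u : ℝ → ℝ be continuous, affine on each interval [kτ, (k+1)τ] (k ∈ ℤ), in L²(ℝ) with u̇ ∈ L²(ℝ), and let v be its upwinded interpolant (v continuous, v(kτ) = u(kτ) for all k, of the form c₁ + c₂ exp(−βt/α) on each interval). Then α ∫ |v̇|² ≤ C ( |u|²_{H^{1/2}} + α ∫ |u̇|² ), where |u|_{H^{1/2}} is the Slobodetski seminorm. -/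
open MeasureTheory

/-- `u` is affine on each interval `[kτ, (k+1)τ]`, `k ∈ ℤ`. -/
def PWAffineZ (τ : ℝ) (u : ℝ → ℝ) : Prop :=
  ∀ k : ℤ, ∃ c₁ c₂ : ℝ,
    ∀ t ∈ Set.Icc ((k : ℝ) * τ) (((k : ℝ) + 1) * τ), u t = c₁ + c₂ * t

/-- `v` is of the upwinded form `c₁ + c₂ exp(−βt/α)` on each interval
`[kτ, (k+1)τ]`, `k ∈ ℤ`. -/
def UpwindZ (α β τ : ℝ) (v : ℝ → ℝ) : Prop :=
  ∀ k : ℤ, ∃ c₁ c₂ : ℝ,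
    ∀ t ∈ Set.Icc ((k : ℝ) * τ) (((k : ℝ) + 1) * τ),
      v t = c₁ + c₂ * Real.exp (-(β * t) / α)

/-! On a cell `[kτ, (k+1)τ]` let `d` be the common increment of `u` and `v`. The affine `u` has
`∫|u̇|² = d²/τ` there and contributes exactly `d²` to the diagonal block of the Slobodetski
integral, while the exponential `v` has `∫|v̇|² = Φ(βτ/α) d²/τ`. Since `Φ(p) ≤ 1 + p/2`
(equivalently `p ≤ eᵖ - 1`), `α ∫|v̇|² ≤ α d²/τ + (β/2) d²` on every cell, and summing over
the cells gives the bound with `C = 1 + β₀/2`. -/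

open Set Real
open scoped ENNReal

theorem lintegral_eq_tsum_setLIntegral_Ioo {τ : ℝ} (hτ : 0 < τ) (f : ℝ → ℝ≥0∞) :
    ∫⁻ x, f x = ∑' k : ℤ, ∫⁻ x in Ioo ((k : ℝ) * τ) ((k + 1) * τ), f x := by
  have hcover := iUnion_Ico_zsmul hτ
  have hdisj := pairwise_disjoint_Ico_zsmul τ
  simp only [zsmul_eq_mul, Int.cast_add, Int.cast_one] at hcover hdisj
  rw [← setLIntegral_univ, ← hcover, lintegral_iUnion (fun _ => measurableSet_Ico) hdisj]
  exact tsum_congr fun k => setLIntegral_congr Ioo_ae_eq_Ico.symm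

theorem lintegral_le_of_forall_Ioo {τ : ℝ} (hτ : 0 < τ) {F G H : ℝ → ℝ≥0∞} {A K : ℝ≥0∞}
    (h : ∀ k : ℤ, A * ∫⁻ x in Ioo ((k : ℝ) * τ) ((k + 1) * τ), F x ≤
      K * ((∫⁻ x in Ioo ((k : ℝ) * τ) ((k + 1) * τ), G x) +
        A * ∫⁻ x in Ioo ((k : ℝ) * τ) ((k + 1) * τ), H x)) :
    A * ∫⁻ x, F x ≤ K * ((∫⁻ x, G x) + A * ∫⁻ x, H x) := by
  simp only [lintegral_eq_tsum_setLIntegral_Ioo hτ]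
  rw [← ENNReal.tsum_mul_left, ← ENNReal.tsum_mul_left, ← ENNReal.tsum_add,
    ← ENNReal.tsum_mul_left]
  exact ENNReal.tsum_le_tsum h

/-- `Φ(p)`: on a cell, `∫|v̇|² = Φ(βτ/α) ∫|u̇|²`. -/
noncomputable def upwindFactor (p : ℝ) : ℝ := (exp p + 1) / (exp p - 1) * (p / 2)

theorem upwindFactor_le {p : ℝ} (hp : 0 < p) : upwindFactor p ≤ 1 + p / 2 := by
  have hexp : 0 < exp p - 1 := by linarith [add_one_lt_exp hp.ne']
  rw [upwindFactor, div_mul_eq_mul_div, div_le_iff₀ hexp]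
  nlinarith [add_one_le_exp p]

theorem integral_sq_deriv_exp {c : ℝ} (w : ℝ) {a b : ℝ} (hc : c ≠ 0) (hab : a ≠ b) :
    ∫ t in a..b, (-(c * w * exp (-(c * t)))) ^ 2 =
      upwindFactor (c * (b - a)) * (w * exp (-(c * b)) - w * exp (-(c * a))) ^ 2 / (b - a) := by
  have hF : ∀ t, HasDerivAt (fun s => -(c * w ^ 2 / 2) * exp (-(2 * c * s)))
      ((-(c * w * exp (-(c * t)))) ^ 2) t := by
    intro t
    refine (((hasDerivAt_id t).const_mul (2 * c)).neg.exp.const_mul _).congr_deriv ?_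
    rw [neg_sq, mul_pow, ← exp_nat_mul]
    simp only [id, Pi.neg_apply, Nat.cast_ofNat]
    ring_nf
  rw [intervalIntegral.integral_eq_sub_of_hasDerivAt (fun t _ => hF t) ((by fun_prop : Continuous _).intervalIntegrable _ _)]
  have hba : b - a ≠ 0 := sub_ne_zero.2 hab.symm
  have hp : exp (c * (b - a)) - 1 ≠ 0 := by
    rw [sub_ne_zero, Ne, exp_eq_one_iff]; exact mul_ne_zero hc hba
  have hea : exp (-(c * a)) = exp (c * (b - a)) * exp (-(c * b)) := by
    rw [← exp_add]; ring_nf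
  have h2a : exp (-(2 * c * a)) = exp (-(c * a)) ^ 2 := by rw [← exp_nat_mul]; ring_nf
  have h2b : exp (-(2 * c * b)) = exp (-(c * b)) ^ 2 := by rw [← exp_nat_mul]; ring_nf
  rw [upwindFactor, h2a, h2b, hea]
  field_simp
  ring

theorem setLIntegral_Ioo_ofReal_sq_eq {f f' g g' : ℝ → ℝ} {a b : ℝ} (hab : a ≤ b)
    (hfg : ∀ t ∈ Icc a b, f t = g t) (hf : ∀ t ∈ Ioo a b, HasDerivAt f (f' t) t)
    (hg : ∀ t, HasDerivAt g (g' t) t) (hg' : Continuous g') :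
    ∫⁻ t in Ioo a b, ENNReal.ofReal (f' t ^ 2) = ENNReal.ofReal (∫ t in a..b, g' t ^ 2) := by
  have hderiv : ∀ t ∈ Ioo a b, f' t = g' t := fun t ht =>
    (hf t ht).unique ((hg t).congr_of_eventuallyEq <|
      Filter.eventually_of_mem (isOpen_Ioo.mem_nhds ht) fun s hs => hfg s (Ioo_subset_Icc_self hs))
  rw [setLIntegral_congr_fun measurableSet_Ioo (fun t ht => by rw [hderiv t ht]),
    setLIntegral_congr Ioo_ae_eq_Ioc, intervalIntegral.integral_of_le hab]
  exact (ofReal_integral_eq_lintegral_ofReal (hg'.pow 2).integrableOn_Ioc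
    (ae_of_all _ fun _ => sq_nonneg _)).symm

theorem setLIntegral_Ioo_sq_deriv_of_affine {u u' : ℝ → ℝ} {a b p q : ℝ} (hab : a < b)
    (hu : ∀ t ∈ Icc a b, u t = p + q * t) (hu' : ∀ t ∈ Ioo a b, HasDerivAt u (u' t) t) :
    ∫⁻ t in Ioo a b, ENNReal.ofReal (u' t ^ 2) = ENNReal.ofReal ((u b - u a) ^ 2 / (b - a)) := by
  have hg : ∀ t, HasDerivAt (fun s => p + q * s) q t := fun t => by
    simpa using ((hasDerivAt_id t).const_mul q).const_add p
  rw [setLIntegral_Ioo_ofReal_sq_eq hab.le hu hu' hg continuous_const,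
    intervalIntegral.integral_const, hu b (right_mem_Icc.2 hab.le), hu a (left_mem_Icc.2 hab.le)]
  have : b - a ≠ 0 := (sub_pos.2 hab).ne'
  congr 1
  field_simp
  ring

theorem setLIntegral_Ioo_slobodetski_of_affine {u : ℝ → ℝ} {a b p q : ℝ} (hab : a < b)
    (hu : ∀ t ∈ Icc a b, u t = p + q * t) :
    ∫⁻ x in Ioo a b, ∫⁻ y in Ioo a b, ENNReal.ofReal ((u x - u y) ^ 2 / |x - y| ^ 2) =
      ENNReal.ofReal ((u b - u a) ^ 2) := by
  have hquot : ∀ x ∈ Ioo a b, ∀ᵐ y ∂volume.restrict (Ioo a b),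
      ENNReal.ofReal ((u x - u y) ^ 2 / |x - y| ^ 2) = ENNReal.ofReal (q ^ 2) := by
    intro x hx
    filter_upwards [ae_restrict_mem measurableSet_Ioo,
      ae_restrict_of_ae (compl_mem_ae_iff.2 (measure_singleton x))] with y hy hyx
    have hxy : x - y ≠ 0 := sub_ne_zero.2 (Ne.symm hyx)
    rw [hu x (Ioo_subset_Icc_self hx), hu y (Ioo_subset_Icc_self hy), sq_abs]
    congr 1
    field_simp
    ring
  have hinner : ∀ x ∈ Ioo a b, ∫⁻ y in Ioo a b,
      ENNReal.ofReal ((u x - u y) ^ 2 / |x - y| ^ 2) = ENNReal.ofReal (q ^ 2 * (b - a)) := by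
    intro x hx
    rw [lintegral_congr_ae (hquot x hx), setLIntegral_const, volume_Ioo,
      ← ENNReal.ofReal_mul (sq_nonneg q)]
  rw [setLIntegral_congr_fun measurableSet_Ioo hinner, setLIntegral_const, volume_Ioo,
    ← ENNReal.ofReal_mul (mul_nonneg (sq_nonneg q) (sub_pos.2 hab).le),
    hu b (right_mem_Icc.2 hab.le), hu a (left_mem_Icc.2 hab.le)]
  congr 1
  ring

theorem setLIntegral_Ioo_sq_deriv_of_upwind {v v' : ℝ → ℝ} {α β a b r w : ℝ} (hα : α ≠ 0)
    (hβ : β ≠ 0) (hab : a < b) (hv : ∀ t ∈ Icc a b, v t = r + w * exp (-(β * t) / α))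
    (hv' : ∀ t ∈ Ioo a b, HasDerivAt v (v' t) t) :
    ∫⁻ t in Ioo a b, ENNReal.ofReal (v' t ^ 2) =
      ENNReal.ofReal (upwindFactor (β / α * (b - a)) * (v b - v a) ^ 2 / (b - a)) := by
  have hrate : ∀ t, -(β * t) / α = -(β / α * t) := fun t => by ring
  simp only [hrate] at hv
  have hg : ∀ t, HasDerivAt (fun s => r + w * exp (-(β / α * s)))
      (-(β / α * w * exp (-(β / α * t)))) t := fun t =>
    ((((hasDerivAt_id t).const_mul (β / α)).neg.exp.const_mul w).const_add r).congr_deriv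
      (by simp only [id, Pi.neg_apply, mul_one]; ring)
  rw [setLIntegral_Ioo_ofReal_sq_eq hab.le hv hv' hg (by fun_prop),
    integral_sq_deriv_exp w (div_ne_zero hβ hα) hab.ne, hv b (right_mem_Icc.2 hab.le),
    hv a (left_mem_Icc.2 hab.le), add_sub_add_left_eq_sub]

theorem upwind_cell_energy_le {u u' v v' : ℝ → ℝ} {α β a b p q r w : ℝ} (hα : 0 < α)
    (hβ : 0 < β) (hab : a < b) (hu : ∀ t ∈ Icc a b, u t = p + q * t)
    (hu' : ∀ t ∈ Ioo a b, HasDerivAt u (u' t) t)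
    (hv : ∀ t ∈ Icc a b, v t = r + w * exp (-(β * t) / α))
    (hv' : ∀ t ∈ Ioo a b, HasDerivAt v (v' t) t) (hva : v a = u a) (hvb : v b = u b) :
    ENNReal.ofReal α * ∫⁻ t in Ioo a b, ENNReal.ofReal (v' t ^ 2) ≤
      ENNReal.ofReal (1 + β / 2) *
        ((∫⁻ x in Ioo a b, ∫⁻ y in Ioo a b, ENNReal.ofReal ((u x - u y) ^ 2 / |x - y| ^ 2)) +
          ENNReal.ofReal α * ∫⁻ t in Ioo a b, ENNReal.ofReal (u' t ^ 2)) := by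
  rw [setLIntegral_Ioo_sq_deriv_of_upwind hα.ne' hβ.ne' hab hv hv',
    setLIntegral_Ioo_slobodetski_of_affine hab hu, setLIntegral_Ioo_sq_deriv_of_affine hab hu hu',
    hva, hvb]
  set d := u b - u a
  have hτ : 0 < b - a := sub_pos.2 hab
  have hu_energy : 0 ≤ α * (d ^ 2 / (b - a)) := by positivity
  have key : α * (upwindFactor (β / α * (b - a)) * d ^ 2 / (b - a)) ≤
      (1 + β / 2) * (d ^ 2 + α * (d ^ 2 / (b - a))) :=
    calc α * (upwindFactor (β / α * (b - a)) * d ^ 2 / (b - a))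
        ≤ α * ((1 + β / α * (b - a) / 2) * d ^ 2 / (b - a)) := by
          gcongr; exact upwindFactor_le (by positivity)
      _ = α * (d ^ 2 / (b - a)) + β / 2 * d ^ 2 := by field_simp
      _ ≤ (1 + β / 2) * (d ^ 2 + α * (d ^ 2 / (b - a))) := by
          nlinarith [sq_nonneg d, mul_nonneg hβ.le hu_energy]
  rw [← ENNReal.ofReal_mul hα.le, ← ENNReal.ofReal_mul hα.le,
    ← ENNReal.ofReal_add (sq_nonneg _) hu_energy, ← ENNReal.ofReal_mul (by positivity)]
  exact ENNReal.ofReal_le_ofReal key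

/-- **Energy bound for the upwinded interpolant, uniformly in `α` and `τ`:** for every
`β₀ > 0` there is `C > 0` such that for all `α, τ > 0`, `0 < β ≤ β₀`, every continuous
`τ`-piecewise affine `u ∈ L²(ℝ)` with piecewise derivative `u' ∈ L²(ℝ)`, and `v` its
upwinded interpolant with piecewise derivative `v'`,
`α ∫ |v̇|² ≤ C ( |u|²_{H^{1/2}} + α ∫ |u̇|² )`. -/
theorem upwind_interpolant_energy_bound :
    ∀ β₀ : ℝ, 0 < β₀ → ∃ C > (0 : ℝ), ∀ α τ β : ℝ, 0 < α → 0 < τ → 0 < β → β ≤ β₀ →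
      ∀ u u' v v' : ℝ → ℝ,
        Continuous u → PWAffineZ τ u → MemLp u 2 volume →
        (∀ k : ℤ, ∀ t ∈ Set.Ioo ((k : ℝ) * τ) (((k : ℝ) + 1) * τ),
          HasDerivAt u (u' t) t) →
        MemLp u' 2 volume →
        Continuous v → (∀ k : ℤ, v ((k : ℝ) * τ) = u ((k : ℝ) * τ)) →
        UpwindZ α β τ v →
        (∀ k : ℤ, ∀ t ∈ Set.Ioo ((k : ℝ) * τ) (((k : ℝ) + 1) * τ),
          HasDerivAt v (v' t) t) →
        ENNReal.ofReal α * (∫⁻ x : ℝ, ENNReal.ofReal ((v' x) ^ 2))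
          ≤ ENNReal.ofReal C *
              (slobHalfSq u + ENNReal.ofReal α * ∫⁻ x : ℝ, ENNReal.ofReal ((u' x) ^ 2)) := by
  intro β₀ hβ₀
  refine ⟨1 + β₀ / 2, by positivity, ?_⟩
  intro α τ β hα hτ hβ hββ₀ u u' v v' _ hu _ hu' _ _ hvu hv hv'
  refine lintegral_le_of_forall_Ioo hτ fun k => ?_
  obtain ⟨p, q, hpq⟩ := hu k
  obtain ⟨r, w, hrw⟩ := hv k
  have hvb : v ((k + 1) * τ) = u ((k + 1) * τ) := by exact_mod_cast hvu (k + 1)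
  calc _ ≤ _ := upwind_cell_energy_le hα hβ (by nlinarith) hpq (hu' k) hrw (hv' k) (hvu k) hvb
    _ ≤ _ := by
      gcongr
      exact Measure.restrict_le_self
end

section
/- Fix β > 0 and let G_α(s) = (β/α) e^{−βs/α} for s ≥ 0 and G_α(s) = 0 for s < 0. For every ε > 0 there exists C > 0 such that for all τ > 0, all α with 0 < α ≤ τ/C, and all u ∈ L²(ℝ) which are constant on each interval (kτ, (k+1)τ) (k ∈ ℤ), one has ‖u − G_α ∗ u‖_{L²(ℝ)} ≤ ε ‖u‖_{L²(ℝ)}. -/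
open MeasureTheory

/-- Exponential upwind kernel: `G_α(s) = (β/α) e^{−βs/α}` for `s ≥ 0`, `0` for `s < 0`. -/
noncomputable def GkerB (α β : ℝ) (s : ℝ) : ℝ :=
  if 0 ≤ s then (β / α) * Real.exp (-(β * s) / α) else 0

/-- Convolution of two functions on `ℝ`. -/
noncomputable def conv (f g : ℝ → ℝ) (t : ℝ) : ℝ :=
  ∫ s : ℝ, f s * g (t - s)

/-! For `r = β / α`, `G_α` is the density of the exponential distribution `Exp(r)`, so
`u t - (G_α ∗ u) t` is the mean of `u t - u (t - s)` over `s ∼ Exp(r)` and Jensen bounds its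
square by the mean of `(u t - u (t - s))²`. After exchanging the integrals it remains to bound
`‖u - u (· - s)‖²` by `(4 |s| / τ) ‖u‖²`: for `|s| < τ` the shift of a `τ`-piecewise constant `u`
differs from `u` only on a set of measure `|s|` in each cell, and for `|s| ≥ τ` the trivial bound
`4 ‖u‖²` suffices. Since `Exp(r)` has mean `1 / r = α / β`, the constant `C = 4 / (β ε²)` works. -/

open ProbabilityTheory Set
open scoped ENNReal

section Jensen

variable {X : Type*} [MeasurableSpace X] {μ : Measure X} [IsProbabilityMeasure μ]

lemma ofReal_sq_integral_le_lintegral {f : X → ℝ} (hf : AEStronglyMeasurable f μ) :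
    ENNReal.ofReal ((∫ x, f x ∂μ) ^ 2) ≤ ∫⁻ x, ENNReal.ofReal (f x ^ 2) ∂μ := by
  have hsq : ∀ a : ℝ, ENNReal.ofReal (a ^ 2) = ‖a‖ₑ ^ 2 := fun a => by
    rw [Real.enorm_eq_ofReal_abs, ← sq_abs, ENNReal.ofReal_pow (abs_nonneg a)]
  calc ENNReal.ofReal ((∫ x, f x ∂μ) ^ 2) = ‖∫ x, f x ∂μ‖ₑ ^ 2 := hsq _
    _ ≤ eLpNorm f 1 μ ^ 2 := by
        rw [eLpNorm_one_eq_lintegral_enorm]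
        gcongr
        exact enorm_integral_le_lintegral_enorm f
    _ ≤ eLpNorm f 2 μ ^ 2 := by
        gcongr
        exact eLpNorm_le_eLpNorm_of_exponent_le one_le_two hf
    _ = ∫⁻ x, ENNReal.ofReal (f x ^ 2) ∂μ := by
        simp_rw [hsq]
        simpa only [ENNReal.coe_ofNat, NNReal.coe_ofNat, ENNReal.rpow_two] using
          eLpNorm_nnreal_pow_eq_lintegral (f := f) (μ := μ) (p := 2) two_ne_zero

lemma ofReal_sq_sub_integral_le_lintegral (a : ℝ) {f : X → ℝ} (hf : AEStronglyMeasurable f μ) :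
    ENNReal.ofReal ((a - ∫ x, f x ∂μ) ^ 2) ≤ ∫⁻ x, ENNReal.ofReal ((a - f x) ^ 2) ∂μ := by
  by_cases hfin : ∫⁻ x, ENNReal.ofReal ((a - f x) ^ 2) ∂μ = ∞
  · exact hfin ▸ le_top
  have hg : AEStronglyMeasurable (fun x => a - f x) μ := aestronglyMeasurable_const.sub hf
  have hg2 : MemLp (fun x => a - f x) 2 μ := (memLp_two_iff_integrable_sq hg).2
    ⟨hg.pow 2, (hasFiniteIntegral_iff_ofReal (ae_of_all _ fun x => sq_nonneg _)).2
      (lt_top_iff_ne_top.2 hfin)⟩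
  have hf1 : Integrable f μ := by
    refine ((integrable_const a).sub (hg2.integrable one_le_two)).congr (ae_of_all _ fun x => ?_)
    simp
  have hmean : a - ∫ x, f x ∂μ = ∫ x, (a - f x) ∂μ := by
    simp [integral_sub (integrable_const a) hf1]
  rw [hmean]
  exact ofReal_sq_integral_le_lintegral hg

end Jensen

namespace ProbabilityTheory

variable {r : ℝ}

lemma measurable_gammaPDF (a r : ℝ) : Measurable (gammaPDF a r) :=
  (measurable_gammaPDFReal a r).ennreal_ofReal

lemma integral_expMeasure (hr : 0 < r) (g : ℝ → ℝ) :
    ∫ s, g s ∂expMeasure r = ∫ s, exponentialPDFReal r s * g s := by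
  rw [expMeasure, gammaMeasure, integral_withDensity_eq_integral_toReal_smul
    (measurable_gammaPDF 1 r) (ae_of_all _ fun _ => ENNReal.ofReal_lt_top)]
  congr with s
  rw [gammaPDF, ENNReal.toReal_ofReal (gammaPDFReal_nonneg one_pos hr s), smul_eq_mul]
  rfl

lemma lintegral_ofReal_abs_expMeasure (hr : 0 < r) :
    ∫⁻ s, ENNReal.ofReal |s| ∂expMeasure r = ENNReal.ofReal r⁻¹ := by
  have h : ∀ s, gammaPDF 1 r s * ENNReal.ofReal |s| = ENNReal.ofReal r⁻¹ * gammaPDF 2 r s := by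
    intro s
    rcases lt_or_ge s 0 with hs | hs
    · simp [gammaPDF_of_neg hs]
    · rw [gammaPDF_of_nonneg hs, gammaPDF_of_nonneg hs, abs_of_nonneg hs,
        ← ENNReal.ofReal_mul (by positivity), ← ENNReal.ofReal_mul (by positivity)]
      congr 1
      norm_num [Real.Gamma_two]
      field_simp
  rw [expMeasure, gammaMeasure,
    lintegral_withDensity_eq_lintegral_mul _ (measurable_gammaPDF 1 r) (by fun_prop)]
  simp_rw [Pi.mul_apply, h]
  rw [lintegral_const_mul' _ _ ENNReal.ofReal_ne_top,
    lintegral_gammaPDF_eq_one two_pos hr, mul_one]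

end ProbabilityTheory

lemma GkerB_eq_exponentialPDFReal (α β : ℝ) : GkerB α β = exponentialPDFReal (β / α) := by
  funext s
  simp only [GkerB, exponentialPDFReal, gammaPDFReal]
  split_ifs
  · simp only [Real.rpow_one, Real.Gamma_one, sub_self, Real.rpow_zero, div_one, mul_one]
    ring_nf
  · rfl

lemma ofReal_sq_sub_le (a b : ℝ) :
    ENNReal.ofReal ((a - b) ^ 2) ≤ 2 * ENNReal.ofReal (a ^ 2) + 2 * ENNReal.ofReal (b ^ 2) := by
  rw [← ENNReal.ofReal_ofNat 2, ← ENNReal.ofReal_mul zero_le_two, ← ENNReal.ofReal_mul zero_le_two,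
    ← ENNReal.ofReal_add (by positivity) (by positivity)]
  exact ENNReal.ofReal_le_ofReal (by nlinarith [sq_nonneg (a + b)])

lemma lintegral_eq_tsum_Ioo_intCast_mul {τ : ℝ} (hτ : 0 < τ) (f : ℝ → ℝ≥0∞) :
    ∫⁻ t, f t = ∑' k : ℤ, ∫⁻ t in Ioo (k * τ) ((k + 1) * τ), f t := by
  have h := lintegral_iUnion (μ := volume) (fun _ => measurableSet_Ioc)
    (pairwise_disjoint_Ioc_zsmul τ) f
  rw [iUnion_Ioc_zsmul hτ, setLIntegral_univ] at h
  simpa only [zsmul_eq_mul, Int.cast_add, Int.cast_one,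
    Measure.restrict_congr_set Ioo_ae_eq_Ioc] using h

section Shift

variable {u : ℝ → ℝ}

lemma lintegral_sq_sub_comp_sub_le_four_mul (hu : AEMeasurable u) (s : ℝ) :
    ∫⁻ t, ENNReal.ofReal ((u t - u (t - s)) ^ 2) ≤ 4 * ∫⁻ t, ENNReal.ofReal (u t ^ 2) :=
  calc ∫⁻ t, ENNReal.ofReal ((u t - u (t - s)) ^ 2)
      ≤ ∫⁻ t, (2 * ENNReal.ofReal (u t ^ 2) + 2 * ENNReal.ofReal (u (t - s) ^ 2)) :=
        lintegral_mono fun t => ofReal_sq_sub_le _ _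
    _ = 2 * (∫⁻ t, ENNReal.ofReal (u t ^ 2)) + 2 * ∫⁻ t, ENNReal.ofReal (u (t - s) ^ 2) := by
        rw [lintegral_add_left' (((hu.pow_const 2).ennreal_ofReal).const_mul 2),
          lintegral_const_mul' _ _ (by norm_num), lintegral_const_mul' _ _ (by norm_num)]
    _ = 4 * ∫⁻ t, ENNReal.ofReal (u t ^ 2) := by
        rw [lintegral_sub_right_eq_self (μ := volume) (fun t => ENNReal.ofReal (u t ^ 2)) s]
        ring

lemma setLIntegral_Ioo_sq_sub_comp_sub_le {a b s c₀ c₁ : ℝ} (hs : 0 ≤ s) (hsb : a + s ≤ b)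
    (hu₀ : ∀ t ∈ Ioo (a - s) a, u t = c₀) (hu₁ : ∀ t ∈ Ioo a b, u t = c₁) :
    ∫⁻ t in Ioo a b, ENNReal.ofReal ((u t - u (t - s)) ^ 2)
      ≤ ENNReal.ofReal ((c₁ - c₀) ^ 2) * ENNReal.ofReal s := by
  have hjump : ∫⁻ t in Ioc a (a + s), ENNReal.ofReal ((u t - u (t - s)) ^ 2)
      = ENNReal.ofReal ((c₁ - c₀) ^ 2) * ENNReal.ofReal s := by
    rw [← Measure.restrict_congr_set Ioo_ae_eq_Ioc, setLIntegral_congr_fun measurableSet_Ioo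
      (g := fun _ => ENNReal.ofReal ((c₁ - c₀) ^ 2)), setLIntegral_const, Real.volume_Ioo,
      add_sub_cancel_left]
    intro t ht
    dsimp only
    rw [hu₁ t ⟨ht.1, ht.2.trans_le hsb⟩, hu₀ (t - s) ⟨by linarith [ht.1], by linarith [ht.2]⟩]
  have hflat : ∫⁻ t in Ioo (a + s) b, ENNReal.ofReal ((u t - u (t - s)) ^ 2) = 0 := by
    rw [setLIntegral_congr_fun measurableSet_Ioo (g := fun _ => 0), lintegral_zero]
    intro t ht
    dsimp only
    rw [hu₁ t ⟨by linarith [ht.1], ht.2⟩, hu₁ (t - s) ⟨by linarith [ht.1], by linarith [ht.2]⟩]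
    simp
  calc ∫⁻ t in Ioo a b, ENNReal.ofReal ((u t - u (t - s)) ^ 2)
      ≤ ∫⁻ t in Ioc a (a + s) ∪ Ioo (a + s) b, ENNReal.ofReal ((u t - u (t - s)) ^ 2) :=
        lintegral_mono_set fun t ht => (le_or_gt t (a + s)).imp (⟨ht.1, ·⟩) (⟨·, ht.2⟩)
    _ ≤ _ := (lintegral_union_le _ _ _).trans (by rw [hjump, hflat, add_zero])

lemma lintegral_sq_sub_comp_sub_le_of_lt {τ s : ℝ} (hs : 0 ≤ s) (hsτ : s < τ) {c : ℤ → ℝ}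
    (hc : ∀ k : ℤ, ∀ t ∈ Ioo (k * τ) ((k + 1) * τ), u t = c k) :
    ∫⁻ t, ENNReal.ofReal ((u t - u (t - s)) ^ 2)
      ≤ ENNReal.ofReal (4 * s / τ) * ∫⁻ t, ENNReal.ofReal (u t ^ 2) := by
  have hτ : 0 < τ := hs.trans_lt hsτ
  have hcell : ∀ k : ℤ, ∫⁻ t in Ioo (k * τ) ((k + 1) * τ), ENNReal.ofReal ((u t - u (t - s)) ^ 2)
      ≤ (2 * ENNReal.ofReal (c k ^ 2) + 2 * ENNReal.ofReal (c (k - 1) ^ 2)) * ENNReal.ofReal s :=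
    fun k => (setLIntegral_Ioo_sq_sub_comp_sub_le hs (by linarith)
      (fun t ht => hc (k - 1) t ⟨by push_cast; linarith [ht.1], by push_cast; linarith [ht.2]⟩)
      (hc k)).trans (by gcongr; exact ofReal_sq_sub_le _ _)
  have hmass : ∀ k : ℤ, ∫⁻ t in Ioo (k * τ) ((k + 1) * τ), ENNReal.ofReal (u t ^ 2)
      = ENNReal.ofReal (c k ^ 2) * ENNReal.ofReal τ := fun k => by
    rw [setLIntegral_congr_fun measurableSet_Ioo (fun t ht => by rw [hc k t ht]),
      setLIntegral_const, Real.volume_Ioo]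
    ring_nf
  have hshift : ∑' k : ℤ, ENNReal.ofReal (c (k - 1) ^ 2) = ∑' k : ℤ, ENNReal.ofReal (c k ^ 2) :=
    (Equiv.subRight (1 : ℤ)).tsum_eq fun k => ENNReal.ofReal (c k ^ 2)
  have hconst : 4 * ENNReal.ofReal s = ENNReal.ofReal (4 * s / τ) * ENNReal.ofReal τ := by
    rw [← ENNReal.ofReal_mul (by positivity), div_mul_cancel₀ _ hτ.ne',
      ENNReal.ofReal_mul zero_le_four, ENNReal.ofReal_ofNat]
  rw [lintegral_eq_tsum_Ioo_intCast_mul hτ, lintegral_eq_tsum_Ioo_intCast_mul hτ]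
  calc _ ≤ ∑' k : ℤ, (2 * ENNReal.ofReal (c k ^ 2) + 2 * ENNReal.ofReal (c (k - 1) ^ 2))
          * ENNReal.ofReal s := ENNReal.tsum_le_tsum hcell
    _ = 4 * ENNReal.ofReal s * ∑' k : ℤ, ENNReal.ofReal (c k ^ 2) := by
        rw [ENNReal.tsum_mul_right, ENNReal.tsum_add, ENNReal.tsum_mul_left, ENNReal.tsum_mul_left,
          hshift]
        ring
    _ = _ := by
        rw [hconst, tsum_congr hmass, ENNReal.tsum_mul_right]
        ring

lemma lintegral_sq_sub_comp_sub_le {τ : ℝ} (hτ : 0 < τ) (hu : AEMeasurable u)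
    (hpc : ∀ k : ℤ, ∃ c : ℝ, ∀ t ∈ Ioo (k * τ) ((k + 1) * τ), u t = c) (s : ℝ) :
    ∫⁻ t, ENNReal.ofReal ((u t - u (t - s)) ^ 2)
      ≤ ENNReal.ofReal (4 * |s| / τ) * ∫⁻ t, ENNReal.ofReal (u t ^ 2) := by
  wlog hs : 0 ≤ s generalizing s
  · rw [← abs_neg, ← lintegral_add_right_eq_self (μ := volume) _ s]
    convert this (-s) (by linarith) using 3 with t
    rw [add_sub_cancel_right, sub_neg_eq_add, ← neg_sub, neg_sq]
  rw [abs_of_nonneg hs]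
  rcases lt_or_ge s τ with hsτ | hτs
  · choose c hc using hpc
    exact lintegral_sq_sub_comp_sub_le_of_lt hs hsτ hc
  · refine (lintegral_sq_sub_comp_sub_le_four_mul hu s).trans ?_
    gcongr
    rw [← ENNReal.ofReal_ofNat 4]
    exact ENNReal.ofReal_le_ofReal ((le_div_iff₀ hτ).2 (by linarith))

end Shift

lemma aemeasurable_sub_comp_sub_prod {u : ℝ → ℝ} (hu : AEMeasurable u) {μ : Measure ℝ} [SFinite μ]
    (hμ : μ ≪ volume) :
    AEMeasurable (fun p : ℝ × ℝ => u p.1 - u (p.1 - p.2)) (volume.prod μ) :=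
  ((hu.comp_quasiMeasurePreserving Measure.quasiMeasurePreserving_fst).sub
    (hu.comp_quasiMeasurePreserving
      (quasiMeasurePreserving_sub_of_right_invariant volume volume))).mono_ac
    (Measure.AbsolutelyContinuous.rfl.prod hμ)

/-- **Convolution with `G_α` is close to the identity on piecewise constants when
`α ≪ τ`:** for each `β > 0` and `ε > 0` there is `C > 0` such that for all `τ > 0`,
all `0 < α ≤ τ/C`, and all `τ`-piecewise constant `u ∈ L²(ℝ)`,
`‖u − G_α ∗ u‖_{L²} ≤ ε ‖u‖_{L²}` (stated in squared form). -/
theorem conv_Gker_close_to_identity :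
    ∀ β : ℝ, 0 < β → ∀ ε : ℝ, 0 < ε → ∃ C > (0 : ℝ), ∀ τ : ℝ, 0 < τ →
      ∀ α : ℝ, 0 < α → α ≤ τ / C →
      ∀ u : ℝ → ℝ, MemLp u 2 volume →
        (∀ k : ℤ, ∃ c : ℝ, ∀ t ∈ Set.Ioo ((k : ℝ) * τ) (((k : ℝ) + 1) * τ), u t = c) →
        (∫⁻ x : ℝ, ENNReal.ofReal ((u x - conv (GkerB α β) u x) ^ 2))
          ≤ ENNReal.ofReal (ε ^ 2) * ∫⁻ x : ℝ, ENNReal.ofReal ((u x) ^ 2) := by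
  intro β hβ ε hε
  refine ⟨4 / (β * ε ^ 2), by positivity, fun τ hτ α hα hαC u hu hpc => ?_⟩
  have hr : 0 < β / α := div_pos hβ hα
  have := isProbabilityMeasure_expMeasure hr
  have hac : expMeasure (β / α) ≪ volume := withDensity_absolutelyContinuous _ _
  replace hu : AEMeasurable u := hu.aestronglyMeasurable.aemeasurable
  have hu_sub (t : ℝ) : AEStronglyMeasurable (fun s => u (t - s)) (expMeasure (β / α)) :=
    (hu.comp_quasiMeasurePreserving
      (Measure.measurePreserving_sub_left volume t).quasiMeasurePreserving).aestronglyMeasurable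
      |>.mono_ac hac
  have hmean : 4 / τ * (β / α)⁻¹ ≤ ε ^ 2 := by
    rw [le_div_iff₀ (by positivity)] at hαC
    rw [inv_div, div_mul_div_comm, div_le_iff₀ (by positivity)]
    field_simp at hαC
    linarith
  calc ∫⁻ t, ENNReal.ofReal ((u t - conv (GkerB α β) u t) ^ 2)
      ≤ ∫⁻ t, ∫⁻ s, ENNReal.ofReal ((u t - u (t - s)) ^ 2) ∂expMeasure (β / α) :=
        lintegral_mono fun t => by
          rw [GkerB_eq_exponentialPDFReal, conv, ← integral_expMeasure hr]
          exact ofReal_sq_sub_integral_le_lintegral _ (hu_sub t)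
    _ = ∫⁻ s, (∫⁻ t, ENNReal.ofReal ((u t - u (t - s)) ^ 2)) ∂expMeasure (β / α) :=
        lintegral_lintegral_swap
          ((aemeasurable_sub_comp_sub_prod hu hac).pow_const 2).ennreal_ofReal
    _ ≤ ∫⁻ s, ENNReal.ofReal (4 / τ) * ENNReal.ofReal |s| * (∫⁻ t, ENNReal.ofReal (u t ^ 2))
          ∂expMeasure (β / α) :=
        lintegral_mono fun s => (lintegral_sq_sub_comp_sub_le hτ hu hpc s).trans_eq <| by
          rw [mul_div_right_comm, ENNReal.ofReal_mul (by positivity)]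
    _ = ENNReal.ofReal (4 / τ * (β / α)⁻¹) * ∫⁻ t, ENNReal.ofReal (u t ^ 2) := by
        rw [lintegral_mul_const _ (by fun_prop), lintegral_const_mul' _ _ ENNReal.ofReal_ne_top,
          lintegral_ofReal_abs_expMeasure hr, ENNReal.ofReal_mul (by positivity)]
    _ ≤ ENNReal.ofReal (ε ^ 2) * ∫⁻ t, ENNReal.ofReal (u t ^ 2) := by gcongr
end

section
/- For every β > 0 and T > 0 there exists a constant C > 0 such that for every α > 0 the boundary-layer function t ↦ exp(−βt/α) has Slobodetski H^{1/2}(0,T) seminorm bounded by C: ∫₀ᵀ ∫₀ᵀ |exp(−βx/α) − exp(−βy/α)|² / |x − y|² dx dy ≤ C. In particular the H^{1/2}(0,T) norms of the functions exp(−β·/α) are uniformly bounded as α → 0. -/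
/-!
Put `a = β / α`. For `x ≤ y`, `e^{-ax} - e^{-ay} = e^{-ax} (1 - e^{-a(y-x)})`, and
`(1 - e^{-s})² ≤ min (1, s²) ≤ 2 s² / (1 + s²)`, so the integrand is dominated by
`(e^{-2ax} + e^{-2ay}) · 2a² / (1 + a²(x - y)²)`. The exponential has integral `1 / (2a)` over
`(0, ∞)` and the Cauchy-type kernel has integral `2πa` over `ℝ`, so the scale `a` cancels and the
double integral is at most `2π`.
-/

open MeasureTheory Set Real
open scoped ENNReal

theorem one_sub_exp_neg_sq_mul_le {s : ℝ} (hs : 0 ≤ s) :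
    (1 - exp (-s)) ^ 2 * (1 + s ^ 2) ≤ 2 * s ^ 2 := by
  have h0 : 0 ≤ 1 - exp (-s) := by simpa using exp_le_one_iff.2 (neg_nonpos.2 hs)
  have h1 : 1 - exp (-s) ≤ 1 := by linarith [exp_pos (-s)]
  have hs' : 1 - exp (-s) ≤ s := by linarith [add_one_le_exp (-s)]
  nlinarith [mul_le_mul hs' hs' h0 hs, mul_le_mul h1 h1 h0 zero_le_one]

theorem one_sub_exp_neg_mul_sq_div_sq_le {a t : ℝ} (ha : 0 ≤ a) (ht : 0 ≤ t) :
    (1 - exp (-a * t)) ^ 2 / t ^ 2 ≤ 2 * a ^ 2 / (1 + (a * t) ^ 2) := by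
  rcases ht.eq_or_lt with rfl | ht
  · rw [zero_pow two_ne_zero, div_zero]; positivity
  have := one_sub_exp_neg_sq_mul_le (mul_nonneg ha ht.le)
  rw [div_le_div_iff₀ (by positivity) (by positivity), neg_mul]
  nlinarith

theorem exp_neg_mul_sub_sq_div_sq_le {a : ℝ} (ha : 0 ≤ a) (x y : ℝ) :
    (exp (-a * x) - exp (-a * y)) ^ 2 / |x - y| ^ 2
      ≤ (exp (-(2 * a) * x) + exp (-(2 * a) * y)) * (2 * a ^ 2 / (1 + (a * (x - y)) ^ 2)) := by
  wlog hxy : x ≤ y generalizing x y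
  · have := this y x (le_of_not_ge hxy)
    rwa [abs_sub_comm, add_comm, sub_sq_comm, ← neg_sub x, mul_neg, neg_sq] at this
  have hsplit : exp (-a * y) = exp (-a * x) * exp (-a * (y - x)) := by
    rw [← exp_add]; ring_nf
  have hsq : exp (-a * x) ^ 2 = exp (-(2 * a) * x) := by
    rw [← exp_nat_mul]; ring_nf
  calc (exp (-a * x) - exp (-a * y)) ^ 2 / |x - y| ^ 2
      = exp (-(2 * a) * x) * ((1 - exp (-a * (y - x))) ^ 2 / (y - x) ^ 2) := by
        rw [hsplit, sq_abs, ← hsq]; ring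
    _ ≤ exp (-(2 * a) * x) * (2 * a ^ 2 / (1 + (a * (y - x)) ^ 2)) := by
        gcongr _ * ?_; exact one_sub_exp_neg_mul_sq_div_sq_le ha (sub_nonneg.2 hxy)
    _ ≤ _ := by
        rw [show (a * (y - x)) ^ 2 = (a * (x - y)) ^ 2 by ring]
        gcongr; exact le_add_of_nonneg_right (exp_pos _).le

theorem lintegral_ofReal_exp_neg_mul_Ioi {b : ℝ} (hb : 0 < b) :
    ∫⁻ x in Ioi 0, ENNReal.ofReal (exp (-b * x)) = ENNReal.ofReal b⁻¹ := by
  rw [← ofReal_integral_eq_lintegral_ofReal (exp_neg_integrableOn_Ioi 0 hb)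
    (ae_of_all _ fun x => (exp_pos _).le), integral_exp_mul_Ioi (neg_neg_of_pos hb)]
  simp

theorem lintegral_ofReal_div_one_add_mul_sq {a c : ℝ} (ha : 0 < a) (hc : 0 ≤ c) :
    ∫⁻ u, ENNReal.ofReal (c / (1 + (a * u) ^ 2)) = ENNReal.ofReal (c * π / a) := by
  have hint : Integrable fun u : ℝ => c / (1 + (a * u) ^ 2) := by
    simpa [div_eq_mul_inv] using (integrable_inv_one_add_sq.comp_mul_left' ha.ne').const_mul c
  rw [← ofReal_integral_eq_lintegral_ofReal hint (ae_of_all _ fun u => by positivity)]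
  simp_rw [div_eq_mul_inv]
  rw [integral_const_mul, Measure.integral_comp_mul_left (fun u => (1 + u ^ 2)⁻¹),
    integral_univ_inv_one_add_sq, abs_of_pos (inv_pos.2 ha), smul_eq_mul]
  ring_nf

section Schur

variable {G : Type*} [MeasurableSpace G] [AddCommGroup G] [MeasurableAdd₂ G] [MeasurableNeg G]
  {μ : Measure G} [SFinite μ] [μ.IsAddLeftInvariant] [μ.IsNegInvariant]

theorem lintegral_lintegral_add_mul_comp_sub_le {f k : G → ℝ≥0∞} (hf : Measurable f)
    (hk : Measurable k) (s : Set G) :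
    ∫⁻ x in s, ∫⁻ y in s, (f x + f y) * k (x - y) ∂μ ∂μ
      ≤ 2 * (∫⁻ x in s, f x ∂μ) * ∫⁻ u, k u ∂μ := by
  have hleft : ∫⁻ x in s, ∫⁻ y in s, f x * k (x - y) ∂μ ∂μ
      ≤ (∫⁻ x in s, f x ∂μ) * ∫⁻ u, k u ∂μ := calc
    _ ≤ ∫⁻ x in s, f x * ∫⁻ u, k u ∂μ ∂μ := lintegral_mono fun x => by
      rw [lintegral_const_mul _ (by fun_prop), ← lintegral_sub_left_eq_self k x]
      gcongr; exact Measure.restrict_le_self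
    _ = _ := lintegral_mul_const _ hf
  have hright : ∫⁻ x in s, ∫⁻ y in s, f y * k (x - y) ∂μ ∂μ
      ≤ (∫⁻ x in s, f x ∂μ) * ∫⁻ u, k u ∂μ := calc
    _ = ∫⁻ y in s, ∫⁻ x in s, f y * k (x - y) ∂μ ∂μ :=
      lintegral_lintegral_swap (by fun_prop)
    _ ≤ ∫⁻ y in s, f y * ∫⁻ u, k u ∂μ ∂μ := lintegral_mono fun y => by
      rw [lintegral_const_mul _ (by fun_prop), ← lintegral_sub_right_eq_self k y]
      gcongr; exact Measure.restrict_le_self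
    _ = _ := lintegral_mul_const _ hf
  calc _ = ∫⁻ x in s, ((∫⁻ y in s, f x * k (x - y) ∂μ) + ∫⁻ y in s, f y * k (x - y) ∂μ) ∂μ :=
        lintegral_congr fun x => by simp_rw [add_mul]; exact lintegral_add_left (by fun_prop) _
    _ = (∫⁻ x in s, ∫⁻ y in s, f x * k (x - y) ∂μ ∂μ)
          + ∫⁻ x in s, ∫⁻ y in s, f y * k (x - y) ∂μ ∂μ :=
        lintegral_add_left (by fun_prop) _
    _ ≤ _ := by grw [hleft, hright]; rw [← two_mul, mul_assoc]

end Schur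

/-- **Uniform `H^{1/2}(0,T)` bound for the boundary-layer exponentials:** for every
`β > 0` and `T > 0` there is `C > 0` such that for every `α > 0` the function
`t ↦ exp(−βt/α)` satisfies
`∫₀ᵀ ∫₀ᵀ |exp(−βx/α) − exp(−βy/α)|² / |x − y|² dx dy ≤ C`. -/
theorem boundary_layer_Hhalf_uniform :
    ∀ β T : ℝ, 0 < β → 0 < T → ∃ C > (0 : ℝ), ∀ α : ℝ, 0 < α →
      (∫⁻ x in Set.Ioo (0 : ℝ) T, ∫⁻ y in Set.Ioo (0 : ℝ) T,
          ENNReal.ofReal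
            ((Real.exp (-(β * x) / α) - Real.exp (-(β * y) / α)) ^ 2 / |x - y| ^ 2))
        ≤ ENNReal.ofReal C := by
  intro β T hβ _
  refine ⟨2 * π, by positivity, fun α hα => ?_⟩
  have hexp : ∀ x, -(β * x) / α = -(β / α) * x := fun x => by ring
  simp_rw [hexp]
  set a := β / α
  have ha : 0 < a := div_pos hβ hα
  set f : ℝ → ℝ≥0∞ := fun x => ENNReal.ofReal (exp (-(2 * a) * x))
  set k : ℝ → ℝ≥0∞ := fun u => ENNReal.ofReal (2 * a ^ 2 / (1 + (a * u) ^ 2))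
  calc _ ≤ ∫⁻ x in Ioo 0 T, ∫⁻ y in Ioo 0 T, (f x + f y) * k (x - y) := by
        refine lintegral_mono fun x => lintegral_mono fun y => ?_
        rw [← ENNReal.ofReal_add (exp_pos _).le (exp_pos _).le, ← ENNReal.ofReal_mul (by positivity)]
        exact ENNReal.ofReal_le_ofReal (exp_neg_mul_sub_sq_div_sq_le ha.le x y)
    _ ≤ 2 * (∫⁻ x in Ioo 0 T, f x) * ∫⁻ u, k u :=
        lintegral_lintegral_add_mul_comp_sub_le (by fun_prop) (by fun_prop) _
    _ ≤ 2 * ENNReal.ofReal (2 * a)⁻¹ * ENNReal.ofReal (2 * a ^ 2 * π / a) := by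
        gcongr
        · exact (lintegral_mono_set Ioo_subset_Ioi_self).trans_eq
            (lintegral_ofReal_exp_neg_mul_Ioi (by positivity))
        · exact (lintegral_ofReal_div_one_add_mul_sq ha (by positivity)).le
    _ = ENNReal.ofReal (2 * π) := by
        rw [← ENNReal.ofReal_ofNat 2, ← ENNReal.ofReal_mul (by norm_num),
          ← ENNReal.ofReal_mul (by positivity)]
        congr 1; field_simp
end
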